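/- arXiv:1501.05922 — 8 statements merged into one kernel-verified Lean document; each statement's English description precedes it below -/
import Mathlib

section
/- In the probability space of the counterexample, let X_t = D σ² 1_{σ ≤ t} (so X jumps at time σ to Dσ² if σ < ∞). Then X_∞ := lim_{t→∞} X_t = D σ² 1_{σ < ∞} exists almost surely and E[|X_∞|] = ∑_{n≥1} n² · (1/(2n²)) = ∞. In particular X_∞ is not integrable and X is not a uniformly integrable martingale. -/
open MeasureTheory Filter ProbabilityTheory
open scoped ENNReal NNReal Topology

/-! The sample space of Cherny's counterexample: `(ℕ ∪ {∞}) × {-1, 1}`, modeled as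
`Option ℕ × Bool` where `none` plays the role of `∞` (points `(0, i)` get measure `0`,
so effectively `ℕ = {1, 2, ...}`), and `true ↦ 1`, `false ↦ -1`. The σ-algebra is the
power set. -/

instance : MeasurableSpace (Option ℕ) := ⊤
instance : MeasurableSingletonClass (Option ℕ) := ⟨fun _ => trivial⟩

/-- The point masses: `P((n,i)) = 1/(4n²)` for `n ≥ 1` and `P((∞,i)) = (1 - π²/12)/2`. -/
noncomputable def chernyP : Option ℕ × Bool → ℝ≥0∞
  | (none, _) => ENNReal.ofReal ((1 - Real.pi ^ 2 / 12) / 2)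
  | (some n, _) => if n = 0 then 0 else 1 / (4 * (n : ℝ≥0∞) ^ 2)

/-- The probability measure of the counterexample. -/
noncomputable def chernyMeasure : Measure (Option ℕ × Bool) :=
  Measure.sum (fun x : Option ℕ × Bool => chernyP x • Measure.dirac x)

/-- `D`: the second coordinate, valued in `{-1, 1}`. -/
noncomputable def chernyD : Option ℕ × Bool → ℝ := fun ω => if ω.2 then 1 else -1

/-- `σ` viewed as an `ℝ≥0∞`-valued time (`∞` for `none`). -/
noncomputable def chernySigma : Option ℕ × Bool → ℝ≥0∞ := fun ω =>
  match ω.1 with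
  | none => ⊤
  | some n => (n : ℝ≥0∞)

/-- The process `X = D σ² 1_{[σ, ∞)}`. -/
noncomputable def chernyX : ℝ≥0 → Option ℕ × Bool → ℝ := fun t ω =>
  match ω.1 with
  | none => 0
  | some n => if (n : ℝ≥0) ≤ t then chernyD ω * (n : ℝ) ^ 2 else 0

/-- The pointwise limit `X_∞ = D σ² 1_{σ < ∞}`. -/
noncomputable def chernyXinf : Option ℕ × Bool → ℝ := fun ω =>
  match ω.1 with
  | none => 0
  | some n => chernyD ω * (n : ℝ) ^ 2

/-- The natural filtration of `X`. -/
noncomputable def chernyF : Filtration ℝ≥0 (inferInstance : MeasurableSpace (Option ℕ × Bool)) :=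
  Filtration.natural chernyX (fun _ => (measurable_of_countable _).stronglyMeasurable)

/-! `X` is eventually constant in `t` at every sample point, which gives the limit. Since
`P(σ = n) = 1/(2n²)`, each `n` contributes `n² · 1/(2n²) = 1/2` to `E|X_∞|`, so the expectation
is infinite. An a.e. limit of a uniformly integrable family is integrable, so `X` cannot be
uniformly integrable. -/

lemma lintegral_sum_smul_dirac {α : Type*} [MeasurableSpace α] [MeasurableSingletonClass α]
    (w f : α → ℝ≥0∞) :
    ∫⁻ a, f a ∂(Measure.sum fun x => w x • Measure.dirac x) = ∑' x, w x * f x := by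
  rw [lintegral_sum_measure]
  exact tsum_congr fun x => by rw [lintegral_smul_measure, lintegral_dirac, smul_eq_mul]

lemma ENNReal.mul_one_div_two_mul_self {a : ℝ≥0∞} (h0 : a ≠ 0) (htop : a ≠ ⊤) :
    a * (1 / (2 * a)) = 1 / 2 := by
  rw [mul_one_div, ← one_mul a, ← mul_assoc, mul_one, ENNReal.mul_div_mul_right _ _ h0 htop]

lemma tendsto_chernyX (ω : Option ℕ × Bool) :
    Tendsto (fun t => chernyX t ω) atTop (𝓝 (chernyXinf ω)) := by
  rcases ω with ⟨_ | n, b⟩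
  · exact tendsto_const_nhds
  · exact tendsto_atTop_of_eventually_const (i₀ := (n : ℝ≥0)) fun t ht => by
      simp [chernyX, chernyXinf, ht]

lemma tsum_chernyP_some {k : ℕ} (hk : k ≠ 0) :
    ∑' b, chernyP (some k, b) = 1 / (2 * (k : ℝ≥0∞) ^ 2) := by
  simp only [tsum_bool, chernyP, hk, if_false]
  rw [← two_mul, mul_one_div, show (4 : ℝ≥0∞) = 2 * 2 by norm_num, mul_assoc,
    ← ENNReal.mul_div_mul_left 1 (2 * (k : ℝ≥0∞) ^ 2) two_ne_zero ENNReal.ofNat_ne_top, mul_one]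

lemma ofReal_abs_chernyXinf_some (n : ℕ) (b : Bool) :
    ENNReal.ofReal |chernyXinf (some n, b)| = (n : ℝ≥0∞) ^ 2 := by
  have habs : |chernyXinf (some n, b)| = (n : ℝ) ^ 2 := by
    cases b <;> simp [chernyXinf, chernyD]
  rw [habs, ENNReal.ofReal_pow n.cast_nonneg, ENNReal.ofReal_natCast]

lemma lintegral_abs_chernyXinf :
    ∫⁻ ω, ENNReal.ofReal |chernyXinf ω| ∂chernyMeasure
      = ∑' n : ℕ, ((n + 1 : ℕ) : ℝ≥0∞) ^ 2 * (1 / (2 * ((n + 1 : ℕ) : ℝ≥0∞) ^ 2)) := by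
  set g : Option ℕ → ℝ≥0∞ := fun o => ∑' b, chernyP (o, b) * ENNReal.ofReal |chernyXinf (o, b)|
  have hg_some (k : ℕ) : g (some k) = (k : ℝ≥0∞) ^ 2 * ∑' b, chernyP (some k, b) := by
    simp only [g, ofReal_abs_chernyXinf_some]
    rw [ENNReal.tsum_mul_right, mul_comm]
  have hg_support : Function.support g ⊆ Set.range fun n : ℕ => some (n + 1) := by
    rintro (_ | _ | n) hne
    · simp [g, chernyXinf] at hne
    · simp [g, chernyP] at hne
    · exact ⟨n, rfl⟩
  rw [chernyMeasure, lintegral_sum_smul_dirac, ENNReal.tsum_prod',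
    ← (Option.some_injective ℕ |>.comp (add_left_injective 1)).tsum_eq hg_support]
  exact tsum_congr fun n => by
    rw [Function.comp_apply, hg_some, tsum_chernyP_some n.succ_ne_zero]

/-- For the counterexample process `X = Dσ²1_{[σ,∞)}`, the limit
`X_∞ = lim_{t→∞} X_t = Dσ²1_{σ<∞}` exists (here: for every `ω`), but
`E[|X_∞|] = ∑_{n≥1} n²/(2n²) = ∞`; in particular `X_∞` is not integrable and `X` is not
uniformly integrable. -/
theorem statement7 :
    (∀ ω : Option ℕ × Bool, Tendsto (fun t => chernyX t ω) atTop (𝓝 (chernyXinf ω))) ∧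
      (∫⁻ ω, ENNReal.ofReal |chernyXinf ω| ∂chernyMeasure
        = ∑' n : ℕ, ((n + 1 : ℕ) : ℝ≥0∞) ^ 2 * (1 / (2 * ((n + 1 : ℕ) : ℝ≥0∞) ^ 2))) ∧
      (∫⁻ ω, ENNReal.ofReal |chernyXinf ω| ∂chernyMeasure = ⊤) ∧
      ¬ Integrable chernyXinf chernyMeasure ∧
      ¬ UniformIntegrable chernyX 1 chernyMeasure := by
  have htop : ∫⁻ ω, ENNReal.ofReal |chernyXinf ω| ∂chernyMeasure = ⊤ := by
    rw [lintegral_abs_chernyXinf, tsum_congr fun n : ℕ => ENNReal.mul_one_div_two_mul_self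
      (pow_ne_zero 2 (Nat.cast_ne_zero.mpr n.succ_ne_zero))
      (ENNReal.pow_ne_top (ENNReal.natCast_ne_top _))]
    exact ENNReal.tsum_const_eq_top_of_ne_zero (by norm_num)
  have hnot_integrable : ¬ Integrable chernyXinf chernyMeasure := fun h =>
    h.abs.lintegral_lt_top.ne htop
  refine ⟨tendsto_chernyX, lintegral_abs_chernyXinf, htop, hnot_integrable, fun hUI => ?_⟩
  exact hnot_integrable <| memLp_one_iff_integrable.mp <|
    hUI.memLp_of_ae_tendsto (ae_of_all _ tendsto_chernyX)
end

section
/- In the counterexample space, let F be the natural filtration of X = Dσ²1_{[σ,∞)} and let τ be any almost surely finite stopping time. Set u = τ((∞,-1)) ∨ τ((∞,1)). Then {σ > u} ⊆ {τ ≤ u}, and consequently τ ∧ σ ≤ u almost surely, i.e., the stopped stopping time τ ∧ σ is uniformly bounded. -/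
open MeasureTheory Filter ProbabilityTheory
open scoped ENNReal NNReal Topology

/-!
Before time `σ` the path of `X` is identically zero, so `F_u` cannot separate a point with
`σ > u` from the point `(∞, D)` with the same sign. The event `{τ ≤ u}` lies in `F_u` and
contains both points `(∞, ±1)` by the choice of `u`, hence it contains `{σ > u}`. On the
complement `σ ≤ u`, so `τ ∧ σ ≤ u` everywhere.
-/

namespace MeasureTheory.Filtration

variable {Ω ι : Type*} [MeasurableSpace Ω] [Preorder ι] {β : ι → Type*}
  [∀ i, TopologicalSpace (β i)] [∀ i, TopologicalSpace.MetrizableSpace (β i)]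
  [∀ i, MeasurableSpace (β i)] [∀ i, BorelSpace (β i)]

theorem mem_iff_of_measurableSet_natural {u : (i : ι) → Ω → β i}
    {hum : ∀ i, StronglyMeasurable (u i)} {i : ι} {A : Set Ω}
    (hA : MeasurableSet[natural u hum i] A) {ω ω' : Ω} (h : ∀ j ≤ i, u j ω = u j ω') :
    ω ∈ A ↔ ω' ∈ A := by
  rw [natural_eq_comap] at hA
  obtain ⟨s, -, rfl⟩ := hA
  have hpath : (fun j : Set.Iic i => u j ω) = fun j : Set.Iic i => u j ω' :=
    funext fun j => h j j.2
  simp only [Set.mem_preimage, hpath]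

end MeasureTheory.Filtration

theorem chernyX_eq_zero_of_lt_chernySigma {t : ℝ≥0} {ω : Option ℕ × Bool}
    (h : (t : ℝ≥0∞) < chernySigma ω) : chernyX t ω = 0 := by
  obtain ⟨_ | n, b⟩ := ω
  · rfl
  · have hnt : ¬ (n : ℝ≥0) ≤ t := fun hle => h.not_ge (by simpa [chernySigma] using hle)
    simp [chernyX, hnt]

theorem mem_of_measurableSet_chernyF {u : ℝ≥0} {A : Set (Option ℕ × Bool)}
    (hA : MeasurableSet[chernyF u] A) (hA_inf : ∀ b, (none, b) ∈ A) {ω : Option ℕ × Bool}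
    (hω : (u : ℝ≥0∞) < chernySigma ω) : ω ∈ A := by
  refine (Filtration.mem_iff_of_measurableSet_natural hA fun j hj => ?_).mpr (hA_inf ω.2)
  rw [chernyX_eq_zero_of_lt_chernySigma (lt_of_le_of_lt (by exact_mod_cast hj) hω)]
  rfl

/-- For any (everywhere finite) stopping time `τ` of the natural filtration of
`X`, with `u = τ((∞,-1)) ⊔ τ((∞,1))`, one has `{σ > u} ⊆ {τ ≤ u}` and consequently
`τ ∧ σ ≤ u` everywhere, i.e. the stopped stopping time `τ ∧ σ` is uniformly bounded. -/
theorem statement8 (τ : Option ℕ × Bool → ℝ≥0) (hτ : IsStoppingTime chernyF (fun ω => (τ ω : WithTop ℝ≥0))) :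
    (∀ ω : Option ℕ × Bool,
        ((max (τ (none, false)) (τ (none, true)) : ℝ≥0) : ℝ≥0∞) < chernySigma ω →
        τ ω ≤ max (τ (none, false)) (τ (none, true))) ∧
      ∀ ω : Option ℕ × Bool,
        min ((τ ω : ℝ≥0∞)) (chernySigma ω)
          ≤ ((max (τ (none, false)) (τ (none, true)) : ℝ≥0) : ℝ≥0∞) := by
  set u := max (τ (none, false)) (τ (none, true))
  have hτ_le : ∀ ω, (u : ℝ≥0∞) < chernySigma ω → τ ω ≤ u := fun ω hω =>
    mem_of_measurableSet_chernyF (A := {x | τ x ≤ u})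
      (by simpa only [WithTop.coe_le_coe] using hτ.measurableSet_le u)
      (fun b => by cases b <;> simp [u]) hω
  refine ⟨hτ_le, fun ω => ?_⟩
  rcases le_or_gt (chernySigma ω) (u : ℝ≥0∞) with hσ | hσ
  · exact (min_le_right _ _).trans hσ
  · exact (min_le_left _ _).trans (by exact_mod_cast hτ_le ω hσ)
end

section
/- There exists a filtered probability space and a right-continuous martingale X such that X_τ is integrable and E[X_τ] = E[X_0] for every almost surely finite stopping time τ, the limit X_∞ = lim_{t→∞} X_t exists almost surely, but X is not a uniformly integrable martingale (indeed X_∞ is not integrable). -/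
/-!
Take `Ω = ℕ × Bool`, give `(k, b)` mass `2^{-(k+2)}`, and let its path jump at time `k` from `0`
to `±k 2ᵏ`, the sign given by `b`. This is a variant of the example with jumps `±n²` of
probability `∼ n⁻²`, chosen so that the masses form a geometric series; the points `(0, b)`
never move and play the role of its never-jumping points.

Flipping the sign preserves the measure and negates every path, while an event of the natural
filtration at time `s` cannot separate `(k, b)` from `(k, !b)` for `k > s`. Hence increments
have zero mean on every `ℱ_s`-event, and a stopping time `τ` sees the jump of `(k, b)` exactly
when it sees that of `(k, !b)`, so `E[X_τ] = 0`. Up to time `u = τ(0, true)` a path that has not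
jumped yet looks like `(0, true)`, so it is stopped by time `u`: `X_τ` only involves jumps up to
time `u` and is bounded. Finally `E|X_∞| = ∑ₖ k/2 = ∞`, and by Vitali's theorem a uniformly
integrable `X` would have an integrable limit.
-/

open MeasureTheory Filter ProbabilityTheory
open scoped ENNReal NNReal Topology

namespace MeasureTheory

section Natural

variable {Ω ι : Type*} {m : MeasurableSpace Ω} [Preorder ι] {β : ι → Type*}
  [∀ i, TopologicalSpace (β i)] [∀ i, TopologicalSpace.MetrizableSpace (β i)]
  [∀ i, MeasurableSpace (β i)] [∀ i, BorelSpace (β i)]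
  {u : (i : ι) → Ω → β i} {hum : ∀ i, StronglyMeasurable (u i)}

theorem Filtration.mem_iff_mem_of_natural {i : ι} {A : Set Ω}
    (hA : MeasurableSet[Filtration.natural u hum i] A) {ω ω' : Ω}
    (h : ∀ j ≤ i, u j ω = u j ω') : ω ∈ A ↔ ω' ∈ A := by
  rw [Filtration.natural_eq_comap] at hA
  obtain ⟨B, -, rfl⟩ := hA
  have : (fun j : Set.Iic i => u j ω) = fun j : Set.Iic i => u j ω' := funext fun j => h j j.2
  simp only [Set.mem_preimage, this]

theorem IsStoppingTime.le_of_natural {τ : Ω → WithTop ι}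
    (hτ : IsStoppingTime (Filtration.natural u hum) τ) {i : ι} {ω ω' : Ω} (hω : τ ω ≤ i)
    (h : ∀ j ≤ i, u j ω = u j ω') : τ ω' ≤ i :=
  (Filtration.mem_iff_mem_of_natural (hτ i) h).1 hω

end Natural

theorem MeasurePreserving.integral_eq_zero_of_comp_eq_neg {α E : Type*} [MeasurableSpace α]
    [NormedAddCommGroup E] [NormedSpace ℝ E] {μ : Measure α} {e : α ≃ᵐ α}
    (he : MeasurePreserving e μ μ) {f : α → E} (hf : ∀ x, f (e x) = -f x) :
    ∫ x, f x ∂μ = 0 := by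
  have : IsAddTorsionFree E := .of_isTorsionFree ℝ E
  simp_rw [← self_eq_neg, ← integral_neg, ← hf, he.integral_comp' f]

end MeasureTheory

namespace JumpMartingale

noncomputable def Xinf (ω : ℕ × Bool) : ℝ := (if ω.2 then 1 else -1) * ((ω.1 * 2 ^ ω.1 : ℕ) : ℝ)

noncomputable def X (t : ℝ≥0) (ω : ℕ × Bool) : ℝ := if (ω.1 : ℝ≥0) ≤ t then Xinf ω else 0

noncomputable def ℱ : Filtration ℝ≥0 (inferInstance : MeasurableSpace (ℕ × Bool)) :=
  Filtration.natural X fun _ => .of_discrete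

noncomputable def mass : PMF (ℕ × Bool) := ⟨fun ω => 2⁻¹ ^ (ω.1 + 1) / 2, by
  rw [ENNReal.summable.hasSum_iff, ENNReal.tsum_prod']
  simp only [tsum_fintype, Fintype.sum_bool, ENNReal.add_halves, ENNReal.tsum_geometric_add_one,
    ENNReal.one_sub_inv_two, inv_inv]
  exact ENNReal.inv_mul_cancel two_ne_zero ENNReal.ofNat_ne_top⟩

noncomputable def μ : Measure (ℕ × Bool) := mass.toMeasure

instance : IsProbabilityMeasure μ := PMF.toMeasure.isProbabilityMeasure mass

lemma μ_singleton (ω : ℕ × Bool) : μ {ω} = 2⁻¹ ^ (ω.1 + 1) / 2 :=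
  mass.toMeasure_apply_singleton ω .of_discrete

def signFlip : (ℕ × Bool) ≃ᵐ (ℕ × Bool) where
  toEquiv := (Equiv.refl ℕ).prodCongr Equiv.boolNot
  measurable_toFun := .of_discrete
  measurable_invFun := .of_discrete

@[simp] lemma signFlip_fst (ω : ℕ × Bool) : (signFlip ω).1 = ω.1 := rfl

@[simp] lemma signFlip_signFlip (ω : ℕ × Bool) : signFlip (signFlip ω) = ω := by
  obtain ⟨k, _ | _⟩ := ω <;> rfl

lemma measurePreserving_signFlip : MeasurePreserving signFlip μ μ := by
  refine ⟨signFlip.measurable, Measure.ext_iff_singleton.2 fun ω => ?_⟩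
  have : signFlip ⁻¹' {ω} = {signFlip ω} := by
    ext ⟨k, b⟩; simp [signFlip, Prod.ext_iff, Bool.not_eq_eq_eq_not]
  rw [signFlip.map_apply, this, μ_singleton, μ_singleton, signFlip_fst]

lemma integral_eq_zero_of_signFlip {f : ℕ × Bool → ℝ} (hf : ∀ ω, f (signFlip ω) = -f ω) :
    ∫ ω, f ω ∂μ = 0 :=
  measurePreserving_signFlip.integral_eq_zero_of_comp_eq_neg hf

lemma Xinf_signFlip (ω : ℕ × Bool) : Xinf (signFlip ω) = -Xinf ω := by
  obtain ⟨k, _ | _⟩ := ω <;> simp [signFlip, Xinf]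

lemma X_signFlip {t t' : ℝ≥0} {ω : ℕ × Bool} (h : (ω.1 : ℝ≥0) ≤ t' ↔ (ω.1 : ℝ≥0) ≤ t) :
    X t' (signFlip ω) = -X t ω := by
  simp only [X, signFlip_fst, h, Xinf_signFlip]
  split_ifs <;> simp

lemma X_of_le {t : ℝ≥0} {ω : ℕ × Bool} (h : (ω.1 : ℝ≥0) ≤ t) : X t ω = Xinf ω := if_pos h

lemma X_of_lt {t : ℝ≥0} {ω : ℕ × Bool} (h : t < ω.1) : X t ω = 0 := if_neg h.not_ge

lemma X_zero_fst (t : ℝ≥0) (b : Bool) : X t (0, b) = 0 := by simp [X, Xinf]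

lemma abs_X_le {t : ℝ≥0} {ω : ℕ × Bool} {N : ℕ} (h : (ω.1 : ℝ≥0) ≤ t → ω.1 ≤ N) :
    |X t ω| ≤ (N * 2 ^ N : ℕ) := by
  unfold X
  split_ifs with hk
  · have hN := h hk
    have : |Xinf ω| = (ω.1 * 2 ^ ω.1 : ℕ) := by obtain ⟨k, _ | _⟩ := ω <;> simp [Xinf]
    rw [this]
    exact_mod_cast Nat.mul_le_mul hN (Nat.pow_le_pow_right two_pos hN)
  · simp

lemma integrable_X_at_of_fst_le {τ : ℕ × Bool → ℝ≥0} (N : ℕ)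
    (h : ∀ ω, (ω.1 : ℝ≥0) ≤ τ ω → ω.1 ≤ N) : Integrable (fun ω => X (τ ω) ω) μ :=
  .of_bound StronglyMeasurable.of_discrete.aestronglyMeasurable _
    (ae_of_all _ fun ω => (Real.norm_eq_abs _).trans_le (abs_X_le (h ω)))

lemma integrable_X (t : ℝ≥0) : Integrable (X t) μ :=
  integrable_X_at_of_fst_le (τ := fun _ => t) ⌈t⌉₊ fun _ hk => by
    exact_mod_cast hk.trans (Nat.le_ceil t)

lemma integral_X (t : ℝ≥0) : ∫ ω, X t ω ∂μ = 0 :=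
  integral_eq_zero_of_signFlip fun _ => X_signFlip Iff.rfl

lemma setIntegral_X_eq {s t : ℝ≥0} (hst : s ≤ t) {A : Set (ℕ × Bool)}
    (hA : MeasurableSet[ℱ s] A) : ∫ ω in A, X t ω ∂μ = ∫ ω in A, X s ω ∂μ := by
  have hsymm (ω : ℕ × Bool) :
      A.indicator (X t - X s) (signFlip ω) = -A.indicator (X t - X s) ω := by
    rcases le_or_gt (ω.1 : ℝ≥0) s with hk | hk
    · have hω : (X t - X s) ω = 0 := by simp [X_of_le hk, X_of_le (hk.trans hst)]
      have hω' : (X t - X s) (signFlip ω) = 0 := by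
        rw [Pi.sub_apply, X_of_le (ω := signFlip ω) hk, X_of_le (ω := signFlip ω) (hk.trans hst),
          sub_self]
      rw [Set.indicator_apply_eq_zero.2 fun _ => hω', Set.indicator_apply_eq_zero.2 fun _ => hω,
        neg_zero]
    · have hmem : signFlip ω ∈ A ↔ ω ∈ A := (Filtration.mem_iff_mem_of_natural hA fun r hr => by
        rw [X_of_lt (hr.trans_lt hk), X_of_lt (ω := signFlip ω) (hr.trans_lt hk)]).symm
      by_cases hω : ω ∈ A
      · simp only [Set.indicator_of_mem hω, Set.indicator_of_mem (hmem.2 hω), Pi.sub_apply,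
          X_signFlip Iff.rfl, neg_sub_neg, neg_sub]
      · simp only [Set.indicator_of_notMem hω, Set.indicator_of_notMem (mt hmem.1 hω), neg_zero]
  have h := integral_eq_zero_of_signFlip hsymm
  rwa [integral_indicator .of_discrete, integral_sub' (integrable_X t).integrableOn
    (integrable_X s).integrableOn, sub_eq_zero] at h

lemma martingale_X : Martingale X ℱ μ :=
  ⟨Filtration.stronglyAdapted_natural _, fun s t hst =>
    (ae_eq_condExp_of_forall_setIntegral_eq (ℱ.le s) (integrable_X t)
      (fun _ _ _ => (integrable_X s).integrableOn) (fun _ hA _ => (setIntegral_X_eq hst hA).symm)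
      (Filtration.stronglyAdapted_natural _ s).aestronglyMeasurable).symm⟩

section StoppingTime

variable {τ : ℕ × Bool → ℝ≥0}

lemma stoppingTime_le_of_lt_fst (hτ : IsStoppingTime ℱ fun ω => (τ ω : WithTop ℝ≥0))
    {ω : ℕ × Bool} (hk : τ (0, true) < ω.1) : τ ω ≤ τ (0, true) :=
  WithTop.coe_le_coe.1 <| hτ.le_of_natural (ω := (0, true)) le_rfl fun r hr => by
    rw [X_zero_fst, X_of_lt (hr.trans_lt hk)]

lemma le_stoppingTime_signFlip_iff (hτ : IsStoppingTime ℱ fun ω => (τ ω : WithTop ℝ≥0))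
    (ω : ℕ × Bool) : (ω.1 : ℝ≥0) ≤ τ (signFlip ω) ↔ (ω.1 : ℝ≥0) ≤ τ ω := by
  have key (ω : ℕ × Bool) (h : τ ω < ω.1) : τ (signFlip ω) < ω.1 :=
    (WithTop.coe_le_coe.1 <| hτ.le_of_natural (ω := ω) le_rfl fun r hr => by
      rw [X_of_lt (hr.trans_lt h), X_of_lt (ω := signFlip ω) (hr.trans_lt h)]).trans_lt h
  refine ⟨fun h => not_lt.1 fun h' => (key ω h').not_ge h, fun h => not_lt.1 fun h' => ?_⟩
  have h'' := key (signFlip ω) h'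
  rw [signFlip_signFlip, signFlip_fst] at h''
  exact h''.not_ge h

lemma integrable_stopped (hτ : IsStoppingTime ℱ fun ω => (τ ω : WithTop ℝ≥0)) :
    Integrable (fun ω => X (τ ω) ω) μ :=
  integrable_X_at_of_fst_le ⌈τ (0, true)⌉₊ fun ω hk => by
    have : (ω.1 : ℝ≥0) ≤ τ (0, true) :=
      not_lt.1 fun hlt => (hk.trans (stoppingTime_le_of_lt_fst hτ hlt)).not_gt hlt
    exact_mod_cast this.trans (Nat.le_ceil _)

lemma integral_stopped (hτ : IsStoppingTime ℱ fun ω => (τ ω : WithTop ℝ≥0)) :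
    ∫ ω, X (τ ω) ω ∂μ = 0 :=
  integral_eq_zero_of_signFlip fun ω => X_signFlip (le_stoppingTime_signFlip_iff hτ ω)

end StoppingTime

lemma continuousWithinAt_X (ω : ℕ × Bool) (t : ℝ≥0) :
    ContinuousWithinAt (fun s => X s ω) (Set.Ici t) t := by
  rcases le_or_gt (ω.1 : ℝ≥0) t with hk | hk
  · exact continuousWithinAt_const.congr (fun s hs => X_of_le (hk.trans hs)) (X_of_le hk)
  · exact continuousWithinAt_const.congr_of_eventuallyEq (eventually_nhdsWithin_of_eventually_nhds
      ((eventually_lt_nhds hk).mono fun s hs => X_of_lt hs)) (X_of_lt hk)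

lemma tendsto_X (ω : ℕ × Bool) : Tendsto (fun t => X t ω) atTop (𝓝 (Xinf ω)) :=
  tendsto_const_nhds.congr' ((eventually_ge_atTop _).mono fun _ ht => (X_of_le ht).symm)

lemma enorm_Xinf_mul_μ (ω : ℕ × Bool) : ‖Xinf ω‖ₑ * μ {ω} = ω.1 / 4 := by
  have h : ‖Xinf ω‖ₑ = ((ω.1 * 2 ^ ω.1 : ℕ) : ℝ≥0∞) := by
    obtain ⟨k, _ | _⟩ := ω <;> simp only [Xinf, enorm_mul, enorm_neg, enorm_one, one_mul,
      Real.enorm_natCast, if_true, if_false, Bool.false_eq_true]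
  rw [h, Nat.cast_mul, Nat.cast_pow, Nat.cast_ofNat, μ_singleton]
  calc (ω.1 * 2 ^ ω.1 : ℝ≥0∞) * (2⁻¹ ^ (ω.1 + 1) / 2) = ω.1 * (2 * 2⁻¹) ^ ω.1 * (2⁻¹ / 2) := by
        rw [mul_pow]; simp only [div_eq_mul_inv]; ring
    _ = ω.1 / 4 := by
        rw [ENNReal.mul_inv_cancel two_ne_zero ENNReal.ofNat_ne_top, one_pow, mul_one,
          ENNReal.div_eq_inv_mul, ← ENNReal.mul_inv (by simp) (by simp), ← div_eq_mul_inv]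
        norm_num

lemma lintegral_enorm_Xinf : ∫⁻ ω, ‖Xinf ω‖ₑ ∂μ = ∞ := by
  rw [lintegral_countable', tsum_congr enorm_Xinf_mul_μ, ENNReal.tsum_prod']
  refine top_unique ?_
  calc ∞ = ∑' _ : ℕ, (1 : ℝ≥0∞) / 4 := (ENNReal.tsum_const_eq_top_of_ne_zero (by simp)).symm
    _ ≤ ∑' k : ℕ, ((k + 1 : ℕ) : ℝ≥0∞) / 4 := ENNReal.tsum_le_tsum fun k => by gcongr; simp
    _ ≤ ∑' k : ℕ, (k : ℝ≥0∞) / 4 :=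
      ENNReal.tsum_comp_le_tsum_of_injective (add_left_injective 1) fun k : ℕ => (k : ℝ≥0∞) / 4
    _ ≤ ∑' (k : ℕ) (_ : Bool), (k : ℝ≥0∞) / 4 :=
      ENNReal.tsum_le_tsum fun k => ENNReal.le_tsum (f := fun _ : Bool => (k : ℝ≥0∞) / 4) true

lemma not_integrable_Xinf : ¬ Integrable Xinf μ := fun h =>
  h.2.ne lintegral_enorm_Xinf

lemma not_uniformIntegrable_X : ¬ UniformIntegrable X 1 μ := fun h =>
  not_integrable_Xinf (h.integrable_of_ae_tendsto (ae_of_all _ tendsto_X))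

end JumpMartingale

/-- There exist a filtered probability space and a right-continuous martingale `X`
such that `X_τ ∈ L¹` and `E[X_τ] = E[X_0]` for every finite stopping time `τ`, the limit
`X_∞ = lim_{t→∞} X_t` exists a.s., but `X` is not a uniformly integrable martingale (indeed
`X_∞` is not integrable). -/
theorem statement9 :
    ∃ (Ω : Type) (m : MeasurableSpace Ω) (μ : Measure Ω) (_ : IsProbabilityMeasure μ)
      (ℱ : Filtration ℝ≥0 m) (X : ℝ≥0 → Ω → ℝ) (Xinf : Ω → ℝ),
      Martingale X ℱ μ ∧
      (∀ᵐ ω ∂μ, ∀ t : ℝ≥0, ContinuousWithinAt (fun s => X s ω) (Set.Ici t) t) ∧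
      (∀ τ : Ω → ℝ≥0, IsStoppingTime ℱ (fun ω => (τ ω : WithTop ℝ≥0)) →
        Integrable (fun ω => X (τ ω) ω) μ ∧ ∫ ω, X (τ ω) ω ∂μ = ∫ ω, X 0 ω ∂μ) ∧
      (∀ᵐ ω ∂μ, Tendsto (fun t => X t ω) atTop (𝓝 (Xinf ω))) ∧
      ¬ Integrable Xinf μ ∧
      ¬ UniformIntegrable X 1 μ :=
  open JumpMartingale in
  ⟨ℕ × Bool, inferInstance, μ, inferInstance, ℱ, X, Xinf, martingale_X,
    ae_of_all _ fun ω t => continuousWithinAt_X ω t,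
    fun _ hτ => ⟨integrable_stopped hτ, (integral_stopped hτ).trans (integral_X 0).symm⟩,
    ae_of_all _ tendsto_X, not_integrable_Xinf, not_uniformIntegrable_X⟩
end

section
/- Let σ be a random variable with values in ℕ ∪ {∞} with P(σ = n) = 1/(2n²), and let U be an independent uniform(0,1) random variable. Then E[σ² 1_{σ ≤ 1/U}] = (1/2) E[⌊1/U⌋] = ∞. -/
/-!
Conditioning on `U = u` reduces the identity to the key computation
`E[σ² 1_{σ ≤ m}] = ∑_{n=1}^m n² / (2n²) = m / 2` with `m = ⌊1/u⌋`. The common value is infinite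
because `⌊1/U⌋ ≥ 1/U - 1` and `∫₀¹ dy / y = ∞`.
-/

open MeasureTheory ProbabilityTheory
open scoped ENNReal

namespace ProbabilityTheory

variable {Ω α β : Type*} {mΩ : MeasurableSpace Ω} {mα : MeasurableSpace α}
  {mβ : MeasurableSpace β} {μ : Measure Ω} [IsFiniteMeasure μ] {X : Ω → α} {Y : Ω → β}

theorem IndepFun.lintegral_comp_eq_lintegral_map (hXY : IndepFun X Y μ) (hX : Measurable X)
    (hY : Measurable Y) {f : α × β → ℝ≥0∞} (hf : Measurable f) :
    ∫⁻ ω, f (X ω, Y ω) ∂μ = ∫⁻ y, ∫⁻ ω, f (X ω, y) ∂μ ∂(μ.map Y) := by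
  rw [← lintegral_map hf (hX.prodMk hY),
    hXY.map_prod_eq_prod_map_map hX.aemeasurable hY.aemeasurable, lintegral_prod_symm' f hf]
  exact lintegral_congr fun y => lintegral_map (hf.comp measurable_prodMk_right) hX

end ProbabilityTheory

lemma ENNReal.natCast_le_ofReal_iff_le_floor (n : ℕ) (t : ℝ) :
    (n : ℝ≥0∞) ≤ ENNReal.ofReal t ↔ n ≤ ⌊t⌋₊ := by
  rcases eq_or_ne n 0 with rfl | hn
  · simp
  · rw [ENNReal.natCast_le_ofReal hn, Nat.le_floor_iff' hn]

section

variable {Ω : Type*} {m : MeasurableSpace Ω} {μ : Measure Ω} {σ : Ω → ℝ≥0∞}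

lemma indicator_le_natCast_sq_eq_sum (hσval : ∀ ω, σ ω = ⊤ ∨ ∃ n : ℕ, 1 ≤ n ∧ σ ω = n)
    (k : ℕ) (ω : Ω) :
    {ω | σ ω ≤ k}.indicator (fun ω => σ ω ^ 2) ω =
      ∑ n ∈ Finset.Icc 1 k, {ω | σ ω = n}.indicator (fun _ => (n : ℝ≥0∞) ^ 2) ω := by
  rcases hσval ω with h | ⟨n, hn, h⟩
  · simp [h]
  · simp [Set.indicator_apply, h, hn]

lemma lintegral_indicator_le_natCast_sq (hσ : Measurable σ)
    (hσval : ∀ ω, σ ω = ⊤ ∨ ∃ n : ℕ, 1 ≤ n ∧ σ ω = n)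
    (hσlaw : ∀ n : ℕ, 1 ≤ n → μ {ω | σ ω = n} = 1 / (2 * (n : ℝ≥0∞) ^ 2)) (k : ℕ) :
    ∫⁻ ω, {ω | σ ω ≤ k}.indicator (fun ω => σ ω ^ 2) ω ∂μ = k / 2 := by
  simp_rw [indicator_le_natCast_sq_eq_sum hσval k]
  rw [lintegral_finsetSum _ fun n _ =>
    measurable_const.indicator (measurableSet_eq_fun hσ measurable_const)]
  calc ∑ n ∈ Finset.Icc 1 k, ∫⁻ ω, {ω | σ ω = n}.indicator (fun _ => (n : ℝ≥0∞) ^ 2) ω ∂μ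
      = ∑ n ∈ Finset.Icc 1 k, (2⁻¹ : ℝ≥0∞) := Finset.sum_congr rfl fun n hn => by
        have hn1 : 1 ≤ n := (Finset.mem_Icc.1 hn).1
        have hn0 : (n : ℝ≥0∞) ^ 2 ≠ 0 := pow_ne_zero 2 (Nat.cast_ne_zero.2 (by omega))
        rw [lintegral_indicator_const (measurableSet_eq_fun hσ measurable_const), hσlaw n hn1,
          one_div, ENNReal.mul_inv (by simp) (by simp), mul_left_comm,
          ENNReal.mul_inv_cancel hn0 (by simp), mul_one]
    _ = k / 2 := by simp [div_eq_mul_inv]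

lemma lintegral_indicator_le_ofReal_sq (hσ : Measurable σ)
    (hσval : ∀ ω, σ ω = ⊤ ∨ ∃ n : ℕ, 1 ≤ n ∧ σ ω = n)
    (hσlaw : ∀ n : ℕ, 1 ≤ n → μ {ω | σ ω = n} = 1 / (2 * (n : ℝ≥0∞) ^ 2)) (t : ℝ) :
    ∫⁻ ω, {ω | σ ω ≤ ENNReal.ofReal t}.indicator (fun ω => σ ω ^ 2) ω ∂μ = ⌊t⌋₊ / 2 := by
  have hset : {ω | σ ω ≤ ENNReal.ofReal t} = {ω | σ ω ≤ ⌊t⌋₊} := by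
    ext ω
    rcases hσval ω with h | ⟨n, -, h⟩ <;> simp [h, ENNReal.natCast_le_ofReal_iff_le_floor]
  rw [hset, lintegral_indicator_le_natCast_sq hσ hσval hσlaw]

end

lemma lintegral_Ioo_zero_one_ofReal_inv : ∫⁻ u in Set.Ioo (0 : ℝ) 1, ENNReal.ofReal u⁻¹ = ⊤ := by
  by_contra h
  have hint : IntegrableOn (fun u : ℝ => u ^ (-1 : ℝ)) (Set.Ioo 0 1) := by
    refine IntegrableOn.congr_fun ((lintegral_ofReal_ne_top_iff_integrable ?_ ?_).1 h)
      (fun u hu => ?_) measurableSet_Ioo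
    · fun_prop
    · exact (ae_restrict_iff' measurableSet_Ioo).2 (.of_forall fun u hu => inv_nonneg.2 hu.1.le)
    · simp [Real.rpow_neg_one]
  simpa using (intervalIntegral.integrableOn_Ioo_rpow_iff zero_lt_one).1 hint

lemma lintegral_Ioo_zero_one_floor_inv : ∫⁻ u in Set.Ioo (0 : ℝ) 1, (⌊u⁻¹⌋₊ : ℝ≥0∞) = ⊤ := by
  have hle : ∀ u : ℝ, ENNReal.ofReal u⁻¹ ≤ ⌊u⁻¹⌋₊ + 1 := fun u => by
    rw [← ENNReal.ofReal_natCast, ← ENNReal.ofReal_one,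
      ← ENNReal.ofReal_add (by positivity) zero_le_one]
    exact ENNReal.ofReal_le_ofReal (Nat.lt_floor_add_one _).le
  have htop : ∫⁻ u in Set.Ioo (0 : ℝ) 1, (⌊u⁻¹⌋₊ : ℝ≥0∞) + 1 = ⊤ :=
    top_le_iff.1 (lintegral_Ioo_zero_one_ofReal_inv ▸ lintegral_mono hle)
  rw [lintegral_add_right _ measurable_const] at htop
  simpa using htop

/-- Let `σ` take values in `{1, 2, ...} ∪ {∞}` with `P(σ = n) = 1/(2n²)`, and
let `U` be an independent uniform(0,1) random variable. Then
`E[σ² 1_{σ ≤ 1/U}] = (1/2) E[⌊1/U⌋] = ∞`. -/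
theorem statement10 {Ω : Type*} {m : MeasurableSpace Ω} {μ : Measure Ω} [IsProbabilityMeasure μ]
    (σ : Ω → ℝ≥0∞) (U : Ω → ℝ)
    (hσmeas : Measurable σ) (hUmeas : Measurable U)
    (hσval : ∀ ω, σ ω = ⊤ ∨ ∃ n : ℕ, 1 ≤ n ∧ σ ω = (n : ℝ≥0∞))
    (hσlaw : ∀ n : ℕ, 1 ≤ n → μ {ω | σ ω = (n : ℝ≥0∞)} = 1 / (2 * (n : ℝ≥0∞) ^ 2))
    (hUlaw : Measure.map U μ = (volume : Measure ℝ).restrict (Set.Ioo 0 1))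
    (hindep : IndepFun σ U μ) :
    (∫⁻ ω, {ω' | σ ω' ≤ ENNReal.ofReal (1 / U ω')}.indicator (fun ω' => (σ ω') ^ 2) ω ∂μ
        = 2⁻¹ * ∫⁻ ω, ((⌊1 / U ω⌋.toNat : ℕ) : ℝ≥0∞) ∂μ) ∧
      ∫⁻ ω, {ω' | σ ω' ≤ ENNReal.ofReal (1 / U ω')}.indicator (fun ω' => (σ ω') ^ 2) ω ∂μ
        = ⊤ := by
  have hfloor_meas : Measurable fun u : ℝ => (⌊u⁻¹⌋₊ : ℝ≥0∞) := by fun_prop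
  have hcond :
      ∫⁻ ω, {ω' | σ ω' ≤ ENNReal.ofReal (1 / U ω')}.indicator (fun ω' => σ ω' ^ 2) ω ∂μ
        = 2⁻¹ * ∫⁻ ω, ((⌊1 / U ω⌋.toNat : ℕ) : ℝ≥0∞) ∂μ := by
    let f : ℝ≥0∞ × ℝ → ℝ≥0∞ := {p | p.1 ≤ ENNReal.ofReal (1 / p.2)}.indicator fun p => p.1 ^ 2
    have hf : Measurable f := by
      refine Measurable.indicator (by fun_prop) (measurableSet_le measurable_fst ?_)
      fun_prop
    calc _ = ∫⁻ ω, f (σ ω, U ω) ∂μ := rfl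
      _ = ∫⁻ u, ∫⁻ ω, f (σ ω, u) ∂μ ∂μ.map U :=
        hindep.lintegral_comp_eq_lintegral_map hσmeas hUmeas hf
      _ = ∫⁻ u, 2⁻¹ * (⌊u⁻¹⌋₊ : ℝ≥0∞) ∂μ.map U := lintegral_congr fun u =>
        (lintegral_indicator_le_ofReal_sq hσmeas hσval hσlaw (1 / u)).trans
          (by rw [one_div, ENNReal.div_eq_inv_mul])
      _ = _ := by
        rw [lintegral_const_mul _ hfloor_meas, lintegral_map hfloor_meas hUmeas]
        simp_rw [Int.floor_toNat, one_div]
  have hfloor : ∫⁻ ω, ((⌊1 / U ω⌋.toNat : ℕ) : ℝ≥0∞) ∂μ = ⊤ := by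
    simp_rw [Int.floor_toNat, one_div]
    rw [← lintegral_map hfloor_meas hUmeas, hUlaw]
    exact lintegral_Ioo_zero_one_floor_inv
  exact ⟨hcond, by rw [hcond, hfloor, ENNReal.mul_top (by norm_num)]⟩
end

section
/- Assume the filtration and paths of X are right-continuous, X_τ is integrable for all finite stopping times τ, and there exists a finite stopping time η and an F_η-measurable uniform(0,1) random variable U. Then E[liminf_{t→∞} |X_t| | F_η] < ∞ almost surely. -/
/-!
Let `g = E[liminf |X_t| | ℱ_η]` and suppose that `A = {g = ∞}` is not null. Since `U` is
`ℱ_η`-measurable with a law dominated by Lebesgue measure, `ℱ_η` has no atoms, so `A` splits into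
infinitely many disjoint `ℱ_η`-sets of positive measure; this yields an `ℱ_η`-measurable,
everywhere finite `h` with `E[h; A] = ∞`. Stop at the first integer time `n ≥ η` with
`h ≤ E[|X_n| | ℱ_η]`, or at `η` if there is none. By Fatou's lemma almost every point of `A` is
stopped this way: on an `ℱ_η`-set where `E[|X_n| | ℱ_η]` stays below a constant for large `n`,
the integral of `g` is finite. Hence `E|X_τ| ≥ E[h; A] = ∞`, contradicting the integrability
of `X_τ`.
-/

open MeasureTheory Filter ProbabilityTheory Set Function
open scoped ENNReal NNReal

section Splitting

variable {Ω : Type*} {mΩ : MeasurableSpace Ω} {μ : Measure Ω}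

theorem exists_subset_measure_ne_zero_lt_of_measure_preimage_le {U : Ω → ℝ}
    (hU : Measurable U) (hUμ : ∀ s, MeasurableSet s → μ (U ⁻¹' s) ≤ volume s) {S : Set Ω}
    (hS : MeasurableSet S) (hS0 : μ S ≠ 0) :
    ∃ T ⊆ S, MeasurableSet T ∧ μ T ≠ 0 ∧ μ T < μ S := by
  obtain ⟨δ, -, hδ0, hδS⟩ := ENNReal.lt_iff_exists_real_btwn.mp (pos_iff_ne_zero.mpr hS0)
  have hδ : 0 < δ := ENNReal.ofReal_pos.mp hδ0
  set I : ℤ → Set ℝ := fun j => Ioc (j • δ) ((j + 1) • δ)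
  obtain ⟨j, hj⟩ : ∃ j, μ (S ∩ U ⁻¹' I j) ≠ 0 := by
    by_contra! h
    refine hS0 (measure_mono_null (fun ω hω => ?_) (measure_iUnion_null h))
    simpa [I, hω] using (iUnion_Ioc_zsmul hδ).symm.subset (mem_univ (U ω))
  refine ⟨S ∩ U ⁻¹' I j, inter_subset_left, hS.inter (hU measurableSet_Ioc), hj, ?_⟩
  calc μ (S ∩ U ⁻¹' I j) ≤ μ (U ⁻¹' I j) := measure_mono inter_subset_right
    _ ≤ volume (I j) := hUμ _ measurableSet_Ioc
    _ = ENNReal.ofReal δ := by simp [I, Real.volume_Ioc, add_smul]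
    _ < μ S := hδS

theorem exists_pairwise_disjoint_subset_measure_ne_zero [IsFiniteMeasure μ]
    (hsplit : ∀ S, MeasurableSet S → μ S ≠ 0 → ∃ T ⊆ S, MeasurableSet T ∧ μ T ≠ 0 ∧ μ T < μ S)
    {A : Set Ω} (hA : MeasurableSet A) (hA0 : μ A ≠ 0) :
    ∃ B : ℕ → Set Ω, (∀ k, MeasurableSet (B k)) ∧ (∀ k, B k ⊆ A) ∧
      Pairwise (Disjoint on B) ∧ ∀ k, μ (B k) ≠ 0 := by
  let P := {S : Set Ω // MeasurableSet S ∧ μ S ≠ 0}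
  have hshrink (S : P) : ∃ T : P, T.1 ⊆ S.1 ∧ μ T.1 < μ S.1 := by
    obtain ⟨T, hTS, hT, hT0, hTlt⟩ := hsplit S.1 S.2.1 S.2.2
    exact ⟨⟨T, hT, hT0⟩, hTS, hTlt⟩
  choose next hnext using hshrink
  let S : ℕ → Set Ω := fun k => (next^[k] ⟨A, hA, hA0⟩).1
  have hS_succ : ∀ k, S (k + 1) = (next (next^[k] ⟨A, hA, hA0⟩)).1 := fun k => by
    simp only [S, iterate_succ_apply']
  have hS_anti : Antitone S := antitone_nat_of_succ_le fun k => (hS_succ k).symm ▸ (hnext _).1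
  refine ⟨fun k => S k \ S (k + 1), fun k => (next^[k] _).2.1.diff (next^[k + 1] _).2.1,
    fun k => sdiff_subset.trans (hS_anti (Nat.zero_le k)), ?_, fun k => ?_⟩
  · refine pairwise_disjoint_on _ |>.mpr fun j k hjk => disjoint_left.mpr ?_
    exact fun ω hj hk => hj.2 (hS_anti (Nat.succ_le_of_lt hjk) hk.1)
  · rw [measure_sdiff (hS_anti (Nat.le_succ k)) (next^[k + 1] _).2.1.nullMeasurableSet
      (measure_ne_top μ _)]
    exact (tsub_pos_of_lt (hS_succ k ▸ (hnext _).2)).ne'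

theorem exists_ne_top_setLIntegral_eq_top_of_pairwise_disjoint [IsFiniteMeasure μ]
    {A : Set Ω} {B : ℕ → Set Ω} (hBm : ∀ k, MeasurableSet (B k)) (hBA : ∀ k, B k ⊆ A)
    (hB : Pairwise (Disjoint on B)) (hB0 : ∀ k, μ (B k) ≠ 0) :
    ∃ h : Ω → ℝ≥0∞, Measurable h ∧ (∀ ω, h ω ≠ ∞) ∧ ∫⁻ ω in A, h ω ∂μ = ∞ := by
  let h : Ω → ℝ≥0∞ := fun ω => ∑' k, (B k).indicator (fun _ => (μ (B k))⁻¹) ω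
  refine ⟨h, .tsum fun k => measurable_const.indicator (hBm k), fun ω => ?_, ?_⟩
  · obtain ⟨k, hk⟩ : ∃ k, ∀ j ≠ k, ω ∉ B j := by
      by_cases hω : ∃ k, ω ∈ B k
      · obtain ⟨k, hk⟩ := hω
        exact ⟨k, fun j hj hj' => disjoint_left.mp (hB hj) hj' hk⟩
      · exact ⟨0, fun j _ hj => hω ⟨j, hj⟩⟩
    simp only [h]
    rw [tsum_eq_single k fun j hj => indicator_of_notMem (hk j hj) _]
    exact ne_top_of_le_ne_top (ENNReal.inv_ne_top.mpr (hB0 k)) (indicator_le_self' (by simp) ω)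
  refine eq_top_iff.mpr ?_
  calc ∞ = ∑' _ : ℕ, (1 : ℝ≥0∞) := (ENNReal.tsum_const_eq_top_of_ne_zero one_ne_zero).symm
    _ = ∑' k, ∫⁻ _ in B k, (μ (B k))⁻¹ ∂μ := by
      simp only [setLIntegral_const, ENNReal.inv_mul_cancel (hB0 _) (measure_ne_top μ _)]
    _ ≤ ∑' k, ∫⁻ ω in B k, h ω ∂μ := ENNReal.tsum_le_tsum fun k =>
      setLIntegral_mono' (hBm k) fun ω hω =>
        (ENNReal.le_tsum k).trans_eq' (indicator_of_mem hω _)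
    _ = ∫⁻ ω in ⋃ k, B k, h ω ∂μ := (lintegral_iUnion hBm hB _).symm
    _ ≤ ∫⁻ ω in A, h ω ∂μ := lintegral_mono_set (iUnion_subset hBA)

theorem exists_ne_top_setLIntegral_eq_top_of_measure_preimage_le [IsFiniteMeasure μ]
    {U : Ω → ℝ} (hU : Measurable U) (hUμ : ∀ s, MeasurableSet s → μ (U ⁻¹' s) ≤ volume s)
    {A : Set Ω} (hA : MeasurableSet A) (hA0 : μ A ≠ 0) :
    ∃ h : Ω → ℝ≥0∞, Measurable h ∧ (∀ ω, h ω ≠ ∞) ∧ ∫⁻ ω in A, h ω ∂μ = ∞ := by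
  obtain ⟨B, hBm, hBA, hB, hB0⟩ := exists_pairwise_disjoint_subset_measure_ne_zero
    (fun _ => exists_subset_measure_ne_zero_lt_of_measure_preimage_le hU hUμ) hA hA0
  exact exists_ne_top_setLIntegral_eq_top_of_pairwise_disjoint hBm hBA hB hB0

end Splitting

section FirstIndex

variable {Ω : Type*} {mΩ : MeasurableSpace Ω}

open Classical

noncomputable def firstIndexOr (Q : ℕ → Set Ω) (η : Ω → ℝ≥0) (ω : Ω) : ℝ≥0 :=
  if h : ∃ n, ω ∈ Q n then Nat.find h else η ω

theorem firstIndexOr_of_mem_disjointed {Q : ℕ → Set Ω} {η : Ω → ℝ≥0} {n : ℕ} {ω : Ω}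
    (hω : ω ∈ disjointed Q n) : firstIndexOr Q η ω = n := by
  have hQ : ∃ n, ω ∈ Q n := ⟨n, disjointed_subset Q n hω⟩
  rw [firstIndexOr, dif_pos hQ, Nat.cast_inj, Nat.find_eq_iff]
  simpa [disjointed_eq_inter_compl] using hω

theorem firstIndexOr_le_iff {Q : ℕ → Set Ω} {η : Ω → ℝ≥0} {ω : Ω} {u : ℝ≥0} :
    firstIndexOr Q η ω ≤ u ↔
      (∃ n : ℕ, (n : ℝ≥0) ≤ u ∧ ω ∈ Q n) ∨ ((∀ n, ω ∉ Q n) ∧ η ω ≤ u) := by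
  unfold firstIndexOr
  split_ifs with hQ
  · refine ⟨fun h => .inl ⟨_, h, Nat.find_spec hQ⟩, ?_⟩
    rintro (⟨n, hn, hωn⟩ | ⟨hω, -⟩)
    · exact le_trans (by exact_mod_cast Nat.find_min' hQ hωn) hn
    · exact absurd hQ (by simpa using hω)
  · push Not at hQ
    simp [hQ]

theorem isStoppingTime_firstIndexOr {ℱ : Filtration ℝ≥0 mΩ} {η : Ω → ℝ≥0}
    (hη : IsStoppingTime ℱ fun ω => (η ω : WithTop ℝ≥0)) {Q : ℕ → Set Ω}
    (hQ : ∀ n, MeasurableSet[hη.measurableSpace] (Q n)) (hQη : ∀ n, Q n ⊆ {ω | η ω ≤ n}) :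
    IsStoppingTime ℱ fun ω => (firstIndexOr Q η ω : WithTop ℝ≥0) := by
  intro u
  have hmeas {s : Set Ω} (hs : MeasurableSet[hη.measurableSpace] s) :
      MeasurableSet[ℱ u] (s ∩ {ω | η ω ≤ u}) := by
    simpa only [WithTop.coe_le_coe] using hs.2 u
  have hset : {ω | (firstIndexOr Q η ω : WithTop ℝ≥0) ≤ u} =
      (⋃ (n : ℕ) (_ : (n : ℝ≥0) ≤ u), Q n ∩ {ω | η ω ≤ u}) ∪
        ((⋃ n, Q n)ᶜ ∩ {ω | η ω ≤ u}) := by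
    ext ω
    simp only [WithTop.coe_le_coe, mem_ofPred_eq, firstIndexOr_le_iff, mem_union, mem_iUnion,
      mem_inter_iff, mem_compl_iff, not_exists, exists_prop]
    refine or_congr ⟨fun ⟨n, hn, hω⟩ => ⟨n, hn, hω, (hQη n hω).trans hn⟩,
      fun ⟨n, hn, hω, _⟩ => ⟨n, hn, hω⟩⟩ Iff.rfl
  rw [hset]
  exact .union (.iUnion fun n => .iUnion fun _ => hmeas (hQ n))
    (hmeas (MeasurableSet.iUnion hQ).compl)

theorem tsum_setLIntegral_disjointed_le_lintegral_firstIndexOr {μ : Measure Ω}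
    {Q : ℕ → Set Ω} (hQ : ∀ n, MeasurableSet (Q n)) (η : Ω → ℝ≥0) (F : ℝ≥0 → Ω → ℝ≥0∞) :
    ∑' n : ℕ, ∫⁻ ω in disjointed Q n, F n ω ∂μ ≤ ∫⁻ ω, F (firstIndexOr Q η ω) ω ∂μ :=
  calc ∑' n : ℕ, ∫⁻ ω in disjointed Q n, F n ω ∂μ
      = ∑' n : ℕ, ∫⁻ ω in disjointed Q n, F (firstIndexOr Q η ω) ω ∂μ :=
        tsum_congr fun n => setLIntegral_congr_fun (.disjointed hQ n) fun ω hω => by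
          rw [firstIndexOr_of_mem_disjointed hω]
    _ = ∫⁻ ω in ⋃ n, disjointed Q n, F (firstIndexOr Q η ω) ω ∂μ :=
        (lintegral_iUnion (.disjointed hQ) (disjoint_disjointed Q) _).symm
    _ ≤ ∫⁻ ω, F (firstIndexOr Q η ω) ω ∂μ := setLIntegral_le_lintegral _ _

end FirstIndex

section CondLExpLiminf

variable {Ω : Type*} {mΩ m0 : MeasurableSpace Ω} {μ : Measure[mΩ] Ω} [IsFiniteMeasure μ]

theorem measure_eq_zero_of_condLExp_eq_top (hm : m0 ≤ mΩ) {Y : ℕ → Ω → ℝ≥0∞}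
    (hY : ∀ n, AEMeasurable (Y n) μ) {L : Ω → ℝ≥0∞}
    (hL : ∀ ω, L ω ≤ liminf (fun n => Y n ω) atTop) {C : Set Ω} (hC : MeasurableSet[m0] C)
    (hC_top : ∀ ω ∈ C, μ⁻[L|m0] ω = ∞) {c : ℝ≥0∞} (hc : c ≠ ∞)
    (hYc : ∀ᶠ n in atTop, ∀ ω ∈ C, μ⁻[Y n|m0] ω ≤ c) : μ C = 0 := by
  have hCm := hm C hC
  by_contra hC0
  have key : ∞ * μ C ≤ c * μ C :=
    calc ∞ * μ C = ∫⁻ ω in C, μ⁻[L|m0] ω ∂μ := by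
          rw [← setLIntegral_const]
          exact setLIntegral_congr_fun hCm fun ω hω => (hC_top ω hω).symm
      _ = ∫⁻ ω in C, L ω ∂μ := setLIntegral_condLExp hm μ L hC
      _ ≤ ∫⁻ ω in C, liminf (fun n => Y n ω) atTop ∂μ := lintegral_mono hL
      _ ≤ liminf (fun n => ∫⁻ ω in C, Y n ω ∂μ) atTop :=
          lintegral_liminf_le' fun n => (hY n).restrict
      _ = liminf (fun n => ∫⁻ ω in C, μ⁻[Y n|m0] ω ∂μ) atTop := by
          simp_rw [setLIntegral_condLExp hm μ _ hC]
      _ ≤ c * μ C := liminf_le_of_frequently_le' <| Eventually.frequently <|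
          hYc.mono fun n hn => (setLIntegral_mono' hCm hn).trans_eq (setLIntegral_const C c)
  rw [ENNReal.top_mul hC0] at key
  exact (ENNReal.mul_lt_top hc.lt_top (measure_lt_top μ C)).not_ge key

theorem measure_condLExp_eq_top_diff_iUnion_eq_zero (hm : m0 ≤ mΩ) {Y : ℕ → Ω → ℝ≥0∞}
    (hY : ∀ n, AEMeasurable (Y n) μ) {L : Ω → ℝ≥0∞}
    (hL : ∀ ω, L ω ≤ liminf (fun n => Y n ω) atTop) {η : Ω → ℝ≥0}
    (hη : ∀ n : ℕ, MeasurableSet[m0] {ω | η ω ≤ n}) {h : Ω → ℝ≥0∞} (hh : Measurable[m0] h)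
    (hh_top : ∀ ω, h ω ≠ ∞) :
    μ ({ω | μ⁻[L|m0] ω = ∞} \ ⋃ n : ℕ, {ω | η ω ≤ n} ∩ {ω | h ω ≤ μ⁻[Y n|m0] ω}) = 0 := by
  set D := {ω | μ⁻[L|m0] ω = ∞} \ ⋃ n : ℕ, {ω | η ω ≤ n} ∩ {ω | h ω ≤ μ⁻[Y n|m0] ω}
  have hD : MeasurableSet[m0] D := (measurable_condLExp m0 μ L (measurableSet_singleton ∞)).diff
    (.iUnion fun n => (hη n).inter (measurableSet_le hh (measurable_condLExp _ _ _)))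
  have hcover : D ⊆ ⋃ (N : ℕ) (k : ℕ), D ∩ {ω | η ω ≤ N} ∩ {ω | h ω ≤ k} := fun ω hω => by
    obtain ⟨N, hN⟩ := exists_nat_ge (η ω)
    obtain ⟨k, hk⟩ := ENNReal.exists_nat_gt (hh_top ω)
    exact mem_iUnion₂.mpr ⟨N, k, ⟨hω, hN⟩, hk.le⟩
  refine measure_mono_null hcover (measure_iUnion_null fun N => measure_iUnion_null fun k => ?_)
  refine measure_eq_zero_of_condLExp_eq_top hm hY hL
    ((hD.inter (hη N)).inter (measurableSet_le hh measurable_const)) (fun ω hω => hω.1.1.1)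
    (ENNReal.natCast_ne_top k) (eventually_atTop.mpr ⟨N, fun n hn ω hω => ?_⟩)
  have hmiss : ¬ h ω ≤ μ⁻[Y n|m0] ω := fun hle =>
    hω.1.1.2 (mem_iUnion.mpr ⟨n, show η ω ≤ n from hω.1.2.trans (Nat.cast_le.mpr hn), hle⟩)
  exact (not_le.mp hmiss).le.trans hω.2

end CondLExpLiminf

theorem setLIntegral_condLExp_liminf_eq_top_lt_top {Ω : Type*} {mΩ : MeasurableSpace Ω}
    {μ : Measure Ω} [IsFiniteMeasure μ] {ℱ : Filtration ℝ≥0 mΩ} {Y : ℝ≥0 → Ω → ℝ≥0∞}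
    (hY : ∀ t, AEMeasurable (Y t) μ)
    (hY_stop : ∀ τ : Ω → ℝ≥0, IsStoppingTime ℱ (fun ω => (τ ω : WithTop ℝ≥0)) →
      ∫⁻ ω, Y (τ ω) ω ∂μ ≠ ∞)
    {η : Ω → ℝ≥0} (hη : IsStoppingTime ℱ fun ω => (η ω : WithTop ℝ≥0))
    {h : Ω → ℝ≥0∞} (hh : Measurable[hη.measurableSpace] h) (hh_top : ∀ ω, h ω ≠ ∞) :
    ∫⁻ ω in {ω | μ⁻[fun ω => liminf (fun t => Y t ω) atTop|hη.measurableSpace] ω = ∞},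
      h ω ∂μ < ∞ := by
  set m0 := hη.measurableSpace
  have hm : m0 ≤ mΩ := hη.measurableSpace_le
  have hηn (n : ℕ) : MeasurableSet[m0] {ω | η ω ≤ n} := by
    simpa only [WithTop.coe_le_coe] using hη.measurableSet_le' n
  set Q : ℕ → Set Ω := fun n => {ω | η ω ≤ n} ∩ {ω | h ω ≤ μ⁻[Y n|m0] ω}
  have hQ (n : ℕ) : MeasurableSet[m0] (Q n) :=
    (hηn n).inter (measurableSet_le hh (measurable_condLExp _ _ _))
  have hQm (n : ℕ) : MeasurableSet[mΩ] (Q n) := hm _ (hQ n)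
  have hτ := isStoppingTime_firstIndexOr hη hQ fun n => inter_subset_left
  have hnull := measure_condLExp_eq_top_diff_iUnion_eq_zero hm (fun n => hY n)
    (fun ω => tendsto_natCast_atTop_atTop.liminf_le_liminf_comp (u := fun t => Y t ω)) hηn hh
    hh_top
  calc _ ≤ ∫⁻ ω in ⋃ n, Q n, h ω ∂μ := lintegral_mono_set' (ae_le_set.mpr hnull)
    _ = ∑' n, ∫⁻ ω in disjointed Q n, h ω ∂μ := by
        rw [← iUnion_disjointed, lintegral_iUnion (.disjointed hQm) (disjoint_disjointed Q)]
    _ ≤ ∑' n, ∫⁻ ω in disjointed Q n, μ⁻[Y n|m0] ω ∂μ := ENNReal.tsum_le_tsum fun n =>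
        setLIntegral_mono' (.disjointed hQm n) fun ω hω => (disjointed_subset Q n hω).2
    _ = ∑' n : ℕ, ∫⁻ ω in disjointed Q n, Y n ω ∂μ := tsum_congr fun n =>
        setLIntegral_condLExp hm μ _ (.disjointed hQ n)
    _ ≤ ∫⁻ ω, Y (firstIndexOr Q η ω) ω ∂μ :=
        tsum_setLIntegral_disjointed_le_lintegral_firstIndexOr hQm η Y
    _ < ∞ := (hY_stop _ hτ).lt_top

theorem statement13_general {Ω : Type*} {m : MeasurableSpace Ω} {μ : Measure Ω} [IsProbabilityMeasure μ]
    (ℱ : Filtration ℝ≥0 m) (X : ℝ≥0 → Ω → ℝ)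
    (hstop : ∀ τ : Ω → ℝ≥0, IsStoppingTime ℱ (fun ω => (τ ω : WithTop ℝ≥0)) → Integrable (fun ω => X (τ ω) ω) μ)
    (η : Ω → ℝ≥0) (hη : IsStoppingTime ℱ (fun ω => (η ω : WithTop ℝ≥0)))
    (U : Ω → ℝ) (hUmeas : Measurable[hη.measurableSpace] U)
    (hUlaw : Measure.map U μ = (volume : Measure ℝ).restrict (Set.Ioo 0 1)) :
    ∃ g : Ω → ℝ≥0∞, Measurable[hη.measurableSpace] g ∧ (∀ᵐ ω ∂μ, g ω < ⊤) ∧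
      ∀ s : Set Ω, MeasurableSet[hη.measurableSpace] s →
        ∫⁻ ω in s, Filter.liminf (fun t => (‖X t ω‖₊ : ℝ≥0∞)) atTop ∂μ
          = ∫⁻ ω in s, g ω ∂μ := by
  have hm := hη.measurableSpace_le
  set L : Ω → ℝ≥0∞ := fun ω => liminf (fun t => (‖X t ω‖₊ : ℝ≥0∞)) atTop
  refine ⟨μ⁻[L|hη.measurableSpace], measurable_condLExp _ μ L, ?_,
    fun s hs => (setLIntegral_condLExp hm μ L hs).symm⟩
  have hA := measurable_condLExp hη.measurableSpace μ L (measurableSet_singleton ∞)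
  refine ae_iff.mpr (by_contra fun hA0 => ?_)
  simp only [not_lt_top_iff] at hA0
  have hUμ (s : Set ℝ) (hs : MeasurableSet s) : μ.trim hm (U ⁻¹' s) ≤ volume s := by
    rw [trim_measurableSet_eq hm (hUmeas hs), ← Measure.map_apply (hUmeas.mono hm le_rfl) hs,
      hUlaw]
    exact Measure.restrict_apply_le _ s
  obtain ⟨h, hh, hh_top, hAh⟩ :=
    exists_ne_top_setLIntegral_eq_top_of_measure_preimage_le hUmeas hUμ hA
    (by rwa [trim_measurableSet_eq hm hA])
  rw [setLIntegral_trim hm hh hA] at hAh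
  refine (setLIntegral_condLExp_liminf_eq_top_lt_top (Y := fun t ω => ‖X t ω‖₊)
    (fun t => (hstop _ (isStoppingTime_const ℱ t)).aestronglyMeasurable.enorm)
    (fun τ hτ => (hstop τ hτ).hasFiniteIntegral.ne) hη hh hh_top).ne hAh

/-- If the filtration and the paths of `X` are right-continuous, `X_τ ∈ L¹` for
all finite stopping times `τ`, and there are a finite stopping time `η` and an
`ℱ_η`-measurable uniform(0,1) random variable `U`, then
`E[liminf_{t→∞} |X_t| | ℱ_η] < ∞` a.s.  The conditional expectation is expressed by an
`ℱ_η`-measurable, a.e. finite `g : Ω → ℝ≥0∞` with `∫_s liminf |X| dμ = ∫_s g dμ` for all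
`s ∈ ℱ_η`. -/
theorem statement13 {Ω : Type*} {m : MeasurableSpace Ω} {μ : Measure Ω} [IsProbabilityMeasure μ]
    (ℱ : Filtration ℝ≥0 m) (X : ℝ≥0 → Ω → ℝ)
    (hℱ : ∀ t : ℝ≥0, ℱ t = ⨅ s : {s : ℝ≥0 // t < s}, ℱ s.1)
    (hadapted : Adapted ℱ X)
    (hrc : ∀ᵐ ω ∂μ, ∀ t : ℝ≥0, ContinuousWithinAt (fun s => X s ω) (Set.Ici t) t)
    (hstop : ∀ τ : Ω → ℝ≥0, IsStoppingTime ℱ (fun ω => (τ ω : WithTop ℝ≥0)) → Integrable (fun ω => X (τ ω) ω) μ)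
    (η : Ω → ℝ≥0) (hη : IsStoppingTime ℱ (fun ω => (η ω : WithTop ℝ≥0)))
    (U : Ω → ℝ) (hUmeas : Measurable[hη.measurableSpace] U)
    (hUlaw : Measure.map U μ = (volume : Measure ℝ).restrict (Set.Ioo 0 1)) :
    ∃ g : Ω → ℝ≥0∞, Measurable[hη.measurableSpace] g ∧ (∀ᵐ ω ∂μ, g ω < ⊤) ∧
      ∀ s : Set Ω, MeasurableSet[hη.measurableSpace] s →
        ∫⁻ ω in s, Filter.liminf (fun t => (‖X t ω‖₊ : ℝ≥0∞)) atTop ∂μ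
          = ∫⁻ ω in s, g ω ∂μ :=
  statement13_general ℱ X hstop η hη U hUmeas hUlaw
end

section
/- Assume the filtration and paths of X are right-continuous, X_τ is integrable for all finite stopping times τ, and E[liminf_{t→∞} |X_t| | F_η] < ∞ almost surely for some finite stopping time η. Then liminf_{t→∞} |X_t| is integrable. -/
/-!
Work at integer times, `𝒢 n = ℱ n`. Right-continuity of the paths makes `L = liminf |X_t|` a.s.
equal to a `⨆ n, 𝒢 n`-measurable function, and `L ≤ liminf |X_n|`. The `ℱ_η`-measurable level
sets `{⌊g⌋ = j}` cut `Ω` into pieces `A` with `∫_A L < ∞`. On such a piece, Lévy's upward theorem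
gives `M_n = E[L 1_A | 𝒢 n] → L` a.s., so a.s. on `A` some `n ≥ η` has `M_n < |X_n| + 1`;
stopping at the first such `n` and using `∫ L = ∫ M_n` on `𝒢 n`-events gives
`∫_A L ≤ ∫_A (|X_σ| + 1)`. The hit is only almost sure and the filtration need not contain the
null sets, so `σ` is capped at `max K ⌈η⌉`, with `K` so large that the capped paths carry
`L`-mass `< ε_A`. Gluing these stopping times along the `ℱ_η`-partition yields one finite
stopping time `τ` with `∫ L ≤ ∫ (|X_τ| + 1) + 1 < ∞`.
-/

open MeasureTheory Filter ProbabilityTheory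
open scoped ENNReal NNReal Topology

theorem iInf_Ici_eq_iInf_Ici_inter_of_dense {α β : Type*} [TopologicalSpace α] [LinearOrder α]
    [OrderTopology α] [DenselyOrdered α] [NoMaxOrder α] [CompleteLinearOrder β]
    [TopologicalSpace β] [OrderClosedTopology β] {f : α → β}
    (hf : ∀ t, ContinuousWithinAt f (Set.Ici t) t) {D : Set α} (hD : Dense D) (a : α) :
    ⨅ t ∈ Set.Ici a, f t = ⨅ t ∈ Set.Ici a ∩ D, f t := by
  refine le_antisymm (biInf_mono Set.inter_subset_left) (le_iInf₂ fun t (ht : a ≤ t) => ?_)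
  have hmem : t ∈ closure (Set.Ioi t ∩ D) :=
    closure_minimal (hD.open_subset_closure_inter isOpen_Ioi) isClosed_closure
      (by rw [closure_Ioi]; exact Set.self_mem_Ici)
  exact continuousWithinAt_const.closure_le hmem
    ((hf t).mono (Set.inter_subset_left.trans Set.Ioi_subset_Ici_self))
    fun s hs => iInf₂_le s ⟨ht.trans hs.1.le, hs.2⟩

theorem liminf_eq_iSup_iInf_Ici_inter_of_dense {R β : Type*} [Semiring R] [LinearOrder R]
    [IsOrderedRing R] [Archimedean R] [TopologicalSpace R] [OrderTopology R] [DenselyOrdered R]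
    [NoMaxOrder R] [CompleteLinearOrder β] [TopologicalSpace β] [OrderClosedTopology β]
    {f : R → β} (hf : ∀ t, ContinuousWithinAt f (Set.Ici t) t) {D : Set R} (hD : Dense D) :
    liminf f atTop = ⨆ n : ℕ, ⨅ t ∈ Set.Ici (n : R) ∩ D, f t := by
  simp only [atTop_hasAntitoneBasis_of_archimedean.liminf_eq_iSup_iInf, iSup_true,
    iInf_Ici_eq_iInf_Ici_inter_of_dense hf hD]

theorem Filter.Tendsto.eventually_lt_add_one_of_le_liminf {ι : Type*} {l : Filter ι} [l.NeBot]
    {u v : ι → ℝ≥0∞} {a : ℝ≥0∞} (hu : Tendsto u l (𝓝 a)) (ha : a ≠ ∞)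
    (hav : a ≤ liminf v l) : ∀ᶠ i in l, u i < v i + 1 := by
  have hlt : a < liminf (fun i => v i + 1) l := by
    rw [liminf_add_const l v 1 (by isBoundedDefault) (by isBoundedDefault)]
    exact (ENNReal.lt_add_right ha one_ne_zero).trans_le (by gcongr)
  obtain ⟨b, hab, hb⟩ := exists_between hlt
  exact ((hu.eventually_lt_const hab).and (eventually_lt_of_lt_liminf hb)).mono
    fun i h => h.1.trans h.2

namespace MeasureTheory

variable {Ω : Type*} {m : MeasurableSpace Ω} {μ : Measure Ω}

theorem lintegral_eq_tsum_preimage_singleton {κ : Type*} [Countable κ] [MeasurableSpace κ]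
    [MeasurableSingletonClass κ] {N : Ω → κ} (hN : Measurable N) (f : Ω → ℝ≥0∞) :
    ∫⁻ ω, f ω ∂μ = ∑' k, ∫⁻ ω in N ⁻¹' {k}, f ω ∂μ := by
  rw [← lintegral_iUnion (fun k => hN (measurableSet_singleton k))
      fun k k' hkk' => Disjoint.preimage N (Set.disjoint_singleton.2 hkk'),
    ← Set.preimage_iUnion, Set.iUnion_of_singleton, Set.preimage_univ, Measure.restrict_univ]

theorem exists_setLIntegral_diff_accumulate_lt [IsFiniteMeasure μ] {f : Ω → ℝ≥0∞} {A : Set Ω}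
    (hfA : ∫⁻ ω in A, f ω ∂μ ≠ ∞) {C : ℕ → Set Ω} (hC : ∀ n, MeasurableSet (C n))
    (hAC : ∀ᵐ ω ∂μ, ω ∈ A → ∃ n, ω ∈ C n) {ε : ℝ≥0∞} (hε : ε ≠ 0) :
    ∃ K, ∫⁻ ω in A \ Set.accumulate C K, f ω ∂μ < ε := by
  have hmeas : ∀ K, MeasurableSet (Set.accumulate C K)ᶜ := fun K =>
    (MeasurableSet.biUnion (Set.to_countable _) fun n _ => hC n).compl
  have hnull : μ.restrict A (⋂ K, (Set.accumulate C K)ᶜ) = 0 := by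
    rw [← Set.compl_iUnion, Set.iUnion_accumulate, Measure.restrict_apply
      (MeasurableSet.iUnion hC).compl]
    refine measure_mono_null (fun ω ⟨hω, hωA⟩ => ?_) (ae_iff.1 hAC)
    simpa [hωA] using hω
  have hlim := tendsto_setLIntegral_zero hfA
    (hnull ▸ tendsto_measure_iInter_atTop (fun K => (hmeas K).nullMeasurableSet)
      (fun _ _ h => Set.compl_subset_compl.2 (Set.monotone_accumulate h)) ⟨0, measure_ne_top _ _⟩)
  obtain ⟨K, hK⟩ := (hlim.eventually (gt_mem_nhds hε.bot_lt)).exists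
  refine ⟨K, ?_⟩
  rwa [Measure.restrict_restrict (hmeas K), Set.inter_comm, ← Set.sdiff_eq] at hK

theorem setLIntegral_ofReal_condExp {m' : MeasurableSpace Ω} (hm : m' ≤ m)
    [SigmaFinite (μ.trim hm)] {f : Ω → ℝ} (hf : Integrable f μ) (hf0 : 0 ≤ᵐ[μ] f) {s : Set Ω}
    (hs : MeasurableSet[m'] s) :
    ∫⁻ ω in s, ENNReal.ofReal (μ[f | m'] ω) ∂μ = ∫⁻ ω in s, ENNReal.ofReal (f ω) ∂μ := by
  rw [← ofReal_integral_eq_lintegral_ofReal integrable_condExp.integrableOn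
      (ae_restrict_of_ae (condExp_nonneg hf0)),
    ← ofReal_integral_eq_lintegral_ofReal hf.integrableOn (ae_restrict_of_ae hf0),
    setIntegral_condExp hm hf hs]

theorem setLIntegral_preimage_floor_toReal_ne_top [IsFiniteMeasure μ] {g : Ω → ℝ≥0∞}
    (hg : Measurable g) (hgfin : ∀ᵐ ω ∂μ, g ω < ∞) (j : ℕ) :
    ∫⁻ ω in (fun ω => ⌊(g ω).toReal⌋₊) ⁻¹' {j}, g ω ∂μ ≠ ∞ := by
  refine ((setLIntegral_mono_ae' (hg.ennreal_toReal.nat_floor (measurableSet_singleton j))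
    (g := fun _ => (j + 1 : ℝ≥0∞)) ?_).trans_lt ?_).ne
  · filter_upwards [hgfin] with ω hfin (hω : ⌊(g ω).toReal⌋₊ = j)
    calc g ω = ENNReal.ofReal (g ω).toReal := (ENNReal.ofReal_toReal hfin.ne).symm
      _ ≤ ENNReal.ofReal (j + 1) :=
          ENNReal.ofReal_le_ofReal (hω ▸ Nat.lt_floor_add_one (g ω).toReal).le
      _ = j + 1 := by rw [ENNReal.ofReal_add (by positivity) zero_le_one]; simp
  · rw [setLIntegral_const]
    exact ENNReal.mul_lt_top (by simp) (measure_lt_top _ _)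

def Filtration.reindex {ι κ : Type*} [Preorder ι] [Preorder κ] (ℱ : Filtration ι m) (f : κ → ι)
    (hf : Monotone f) : Filtration κ m :=
  ⟨fun k => ℱ (f k), fun _ _ h => ℱ.mono (hf h), fun _ => ℱ.le _⟩

theorem isStoppingTime_apply_index {ι κ : Type*} [Preorder ι] {ℱ : Filtration ι m} [Countable κ]
    [MeasurableSpace κ] [MeasurableSingletonClass κ] {ρ : Ω → WithTop ι}
    (hρ : IsStoppingTime ℱ ρ) {σ : κ → Ω → WithTop ι} (hσ : ∀ k, IsStoppingTime ℱ (σ k))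
    (hρσ : ∀ k, ρ ≤ σ k) {J : Ω → κ} (hJ : Measurable[hρ.measurableSpace] J) :
    IsStoppingTime ℱ fun ω => σ (J ω) ω := by
  intro i
  have hunion : {ω | σ (J ω) ω ≤ i} =
      ⋃ k, (J ⁻¹' {k} ∩ {ω | ρ ω ≤ i}) ∩ {ω | σ k ω ≤ i} := by
    ext ω
    simp only [Set.mem_ofPred_eq, Set.mem_iUnion, Set.mem_inter_iff, Set.mem_preimage,
      Set.mem_singleton_iff]
    exact ⟨fun h => ⟨J ω, ⟨rfl, (hρσ _ ω).trans h⟩, h⟩, fun ⟨_, ⟨hk, _⟩, h⟩ => hk ▸ h⟩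
  rw [hunion]
  exact MeasurableSet.iUnion fun k => ((hJ (measurableSet_singleton k)).2 i).inter (hσ k i)

section Discrete

variable {𝒢 : Filtration ℕ m}

theorem IsStoppingTime.measurableSet_preimage_singleton {σ : Ω → ℕ}
    (hσ : IsStoppingTime 𝒢 fun ω => (σ ω : WithTop ℕ)) (n : ℕ) :
    MeasurableSet[𝒢 n] (σ ⁻¹' {n}) := by
  have h := hσ.measurableSet_eq n
  simp only [Nat.cast_withTop, WithTop.coe_inj] at h
  exact h

theorem isStoppingTime_nat_find {W : ℕ → Set Ω} [∀ ω, DecidablePred fun n => ω ∈ W n]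
    (hW : ∀ n, MeasurableSet[𝒢 n] (W n)) (h : ∀ ω, ∃ n, ω ∈ W n) :
    IsStoppingTime 𝒢 fun ω => (Nat.find (h ω) : WithTop ℕ) := by
  intro i
  have hunion : {ω | (Nat.find (h ω) : WithTop ℕ) ≤ i} = ⋃ n ≤ i, W n := by
    ext ω
    simp [Nat.find_le_iff]
  change MeasurableSet[𝒢 i] {ω | (Nat.find (h ω) : WithTop ℕ) ≤ i}
  rw [hunion]
  exact MeasurableSet.biUnion (Set.to_countable _) fun n hn => 𝒢.mono hn _ (hW n)

theorem IsStoppingTime.measurableSet_le_nat {σ : Ω → ℕ}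
    (hσ : IsStoppingTime 𝒢 fun ω => (σ ω : WithTop ℕ)) (n : ℕ) :
    MeasurableSet[𝒢 n] {ω | σ ω ≤ n} := by
  simpa only [Nat.cast_withTop, WithTop.coe_le_coe] using hσ n

theorem IsStoppingTime.measurableSet_inter_le_nat {σ : Ω → ℕ}
    {hσ : IsStoppingTime 𝒢 fun ω => (σ ω : WithTop ℕ)} {A : Set Ω}
    (hA : MeasurableSet[hσ.measurableSpace] A) (n : ℕ) :
    MeasurableSet[𝒢 n] (A ∩ {ω | σ ω ≤ n}) := by
  simpa only [Nat.cast_withTop, WithTop.coe_le_coe] using hA.2 n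

theorem setLIntegral_ofReal_le_of_condExp_le [IsFiniteMeasure μ] {f : Ω → ℝ}
    (hf : Integrable f μ) (hf0 : 0 ≤ᵐ[μ] f) {ρ σ : Ω → ℕ}
    {hρ : IsStoppingTime 𝒢 fun ω => (ρ ω : WithTop ℕ)}
    (hσ : IsStoppingTime 𝒢 fun ω => (σ ω : WithTop ℕ)) (hρσ : ρ ≤ σ) {A : Set Ω}
    (hA : MeasurableSet[hρ.measurableSpace] A) {Z : ℕ → Ω → ℝ≥0∞}
    (hZ : ∀ n, Measurable[𝒢 n] (Z n)) :
    ∫⁻ ω in {ω | ENNReal.ofReal (μ[f | 𝒢 (σ ω)] ω) ≤ Z (σ ω) ω} ∩ A, ENNReal.ofReal (f ω) ∂μ ≤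
      ∫⁻ ω in {ω | ENNReal.ofReal (μ[f | 𝒢 (σ ω)] ω) ≤ Z (σ ω) ω} ∩ A, Z (σ ω) ω ∂μ := by
  set D := {ω | ENNReal.ofReal (μ[f | 𝒢 (σ ω)] ω) ≤ Z (σ ω) ω} ∩ A
  have hσm : Measurable σ :=
    measurable_to_countable' fun n => 𝒢.le n _ (hσ.measurableSet_preimage_singleton n)
  rw [lintegral_eq_tsum_preimage_singleton hσm, lintegral_eq_tsum_preimage_singleton hσm]
  refine ENNReal.tsum_le_tsum fun n => ?_
  rw [Measure.restrict_restrict (hσm (measurableSet_singleton n))]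
  have hDn : σ ⁻¹' {n} ∩ D =
      (σ ⁻¹' {n} ∩ {ω | ENNReal.ofReal (μ[f | 𝒢 n] ω) ≤ Z n ω}) ∩ (A ∩ {ω | ρ ω ≤ n}) := by
    ext ω
    simp only [D, Set.mem_inter_iff, Set.mem_preimage, Set.mem_singleton_iff, Set.mem_ofPred_eq]
    constructor
    · rintro ⟨rfl, hωD, hωA⟩
      exact ⟨⟨rfl, hωD⟩, hωA, hρσ ω⟩
    · rintro ⟨⟨rfl, hωD⟩, hωA, -⟩
      exact ⟨rfl, hωD, hωA⟩
  have hDm : MeasurableSet[𝒢 n] (σ ⁻¹' {n} ∩ D) := by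
    rw [hDn]
    exact ((hσ.measurableSet_preimage_singleton n).inter
      (measurableSet_le (ENNReal.measurable_ofReal.comp stronglyMeasurable_condExp.measurable)
        (hZ n))).inter (IsStoppingTime.measurableSet_inter_le_nat hA n)
  rw [← setLIntegral_ofReal_condExp (𝒢.le n) hf hf0 hDm]
  refine setLIntegral_mono' (𝒢.le n _ hDm) fun ω ⟨hn, hωD⟩ => ?_
  rw [Set.mem_preimage, Set.mem_singleton_iff] at hn
  exact hn ▸ hωD.1

theorem exists_isStoppingTime_notMem_accumulate_of_notMem {ρ : Ω → ℕ}
    (hρ : IsStoppingTime 𝒢 fun ω => (ρ ω : WithTop ℕ)) {C : ℕ → Set Ω}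
    (hC : ∀ n, MeasurableSet[𝒢 n] (C n)) (hCρ : ∀ n, C n ⊆ {ω | ρ ω ≤ n}) (K : ℕ) :
    ∃ σ : Ω → ℕ, (IsStoppingTime 𝒢 fun ω => (σ ω : WithTop ℕ)) ∧ ρ ≤ σ ∧
      ∀ ω, ω ∉ C (σ ω) → ω ∉ Set.accumulate C K := by
  classical
  set W : ℕ → Set Ω := fun n => C n ∪ {ω | K ≤ n ∧ ρ ω ≤ n}
  have hW : ∀ ω, ∃ n, ω ∈ W n := fun ω => ⟨max K (ρ ω), Or.inr ⟨le_max_left .., le_max_right ..⟩⟩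
  refine ⟨fun ω => Nat.find (hW ω), isStoppingTime_nat_find (W := W)
    (fun n => (hC n).union ((MeasurableSet.const _).inter (hρ.measurableSet_le_nat n))) hW,
    fun ω => (Nat.find_spec (hW ω)).elim (hCρ _ ·) (·.2), fun ω hωC hω => ?_⟩
  have hK : K ≤ Nat.find (hW ω) := ((Nat.find_spec (hW ω)).resolve_left hωC).1
  obtain ⟨n, hnK, hωn⟩ := Set.mem_accumulate.1 hω
  rcases (hnK.trans hK).lt_or_eq with hlt | rfl
  · exact Nat.find_min (hW ω) hlt (Or.inl hωn)
  · exact hωC hωn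

theorem ae_exists_ofReal_condExp_lt_enorm_add_one [IsFiniteMeasure μ] {f : Ω → ℝ}
    (hf : Integrable f μ) (hfm : StronglyMeasurable[⨆ n, 𝒢 n] f) {Y : ℕ → Ω → ℝ}
    (hfY : ∀ᵐ ω ∂μ, ENNReal.ofReal (f ω) ≤ liminf (fun n => ‖Y n ω‖ₑ) atTop) (ρ : Ω → ℕ) :
    ∀ᵐ ω ∂μ, ∃ n, ρ ω ≤ n ∧ ENNReal.ofReal (μ[f | 𝒢 n] ω) < ‖Y n ω‖ₑ + 1 := by
  filter_upwards [hf.tendsto_ae_condExp hfm, hfY] with ω hlim hle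
  exact ((eventually_ge_atTop (ρ ω)).and
    ((ENNReal.tendsto_ofReal hlim).eventually_lt_add_one_of_le_liminf
      ENNReal.ofReal_ne_top hle)).exists

theorem exists_isStoppingTime_setLIntegral_ofReal_le [IsFiniteMeasure μ] {Y : ℕ → Ω → ℝ}
    (hY : Adapted 𝒢 Y) {ρ : Ω → ℕ} (hρ : IsStoppingTime 𝒢 fun ω => (ρ ω : WithTop ℕ))
    {f : Ω → ℝ} (hf : Integrable f μ) (hf0 : 0 ≤ᵐ[μ] f) (hfm : StronglyMeasurable[⨆ n, 𝒢 n] f)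
    (hfY : ∀ᵐ ω ∂μ, ENNReal.ofReal (f ω) ≤ liminf (fun n => ‖Y n ω‖ₑ) atTop) {A : Set Ω}
    (hA : MeasurableSet[hρ.measurableSpace] A) {ε : ℝ≥0∞} (hε : ε ≠ 0) :
    ∃ σ : Ω → ℕ, (IsStoppingTime 𝒢 fun ω => (σ ω : WithTop ℕ)) ∧ ρ ≤ σ ∧
      ∫⁻ ω in A, ENNReal.ofReal (f ω) ∂μ ≤ ∫⁻ ω in A, (‖Y (σ ω) ω‖ₑ + 1) ∂μ + ε := by
  set C : ℕ → Set Ω := fun n => {ω | ρ ω ≤ n ∧ ENNReal.ofReal (μ[f | 𝒢 n] ω) < ‖Y n ω‖ₑ + 1}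
  have hZ : ∀ n, Measurable[𝒢 n] fun ω => ‖Y n ω‖ₑ + 1 := fun n =>
    (measurable_enorm.comp (hY n)).add_const 1
  have hC : ∀ n, MeasurableSet[𝒢 n] (C n) := fun n => (hρ.measurableSet_le_nat n).inter
    (measurableSet_lt (ENNReal.measurable_ofReal.comp stronglyMeasurable_condExp.measurable)
      (hZ n))
  obtain ⟨K, hK⟩ := exists_setLIntegral_diff_accumulate_lt
    ((setLIntegral_le_lintegral A _).trans_lt hf.lintegral_lt_top).ne
    (fun n => 𝒢.le n _ (hC n))
    ((ae_exists_ofReal_condExp_lt_enorm_add_one hf hfm hfY ρ).mono fun ω h _ => h) hε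
  obtain ⟨σ, hσ, hρσ, hescape⟩ :=
    exists_isStoppingTime_notMem_accumulate_of_notMem hρ hC (fun n _ h => h.1) K
  refine ⟨σ, hσ, hρσ, ?_⟩
  set D := {ω | ENNReal.ofReal (μ[f | 𝒢 (σ ω)] ω) ≤ ‖Y (σ ω) ω‖ₑ + 1} ∩ A
  have hAD : A \ D ⊆ A \ Set.accumulate C K := fun ω ⟨hωA, hωD⟩ =>
    ⟨hωA, hescape ω fun hωC => hωD ⟨hωC.2.le, hωA⟩⟩
  calc ∫⁻ ω in A, ENNReal.ofReal (f ω) ∂μ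
        ≤ ∫⁻ ω in D, ENNReal.ofReal (f ω) ∂μ + ∫⁻ ω in A \ D, ENNReal.ofReal (f ω) ∂μ :=
        (lintegral_mono_set (Set.subset_union_right.trans_eq Set.union_sdiff_self.symm)).trans
          (lintegral_union_le _ _ _)
    _ ≤ ∫⁻ ω in A, (‖Y (σ ω) ω‖ₑ + 1) ∂μ + ε :=
        add_le_add ((setLIntegral_ofReal_le_of_condExp_le hf hf0 hσ hρσ hA hZ).trans
          (lintegral_mono_set Set.inter_subset_right)) ((lintegral_mono_set hAD).trans hK.le)

theorem exists_isStoppingTime_setLIntegral_le [IsFiniteMeasure μ] {Y : ℕ → Ω → ℝ}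
    (hY : Adapted 𝒢 Y) {ρ : Ω → ℕ} (hρ : IsStoppingTime 𝒢 fun ω => (ρ ω : WithTop ℕ))
    {L : Ω → ℝ≥0∞} (hL : Measurable[⨆ n, 𝒢 n] L)
    (hLY : ∀ᵐ ω ∂μ, L ω ≤ liminf (fun n => ‖Y n ω‖ₑ) atTop) {A : Set Ω}
    (hA : MeasurableSet[hρ.measurableSpace] A) (hLA : ∫⁻ ω in A, L ω ∂μ ≠ ∞) {ε : ℝ≥0∞}
    (hε : ε ≠ 0) :
    ∃ σ : Ω → ℕ, (IsStoppingTime 𝒢 fun ω => (σ ω : WithTop ℕ)) ∧ ρ ≤ σ ∧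
      ∫⁻ ω in A, L ω ∂μ ≤ ∫⁻ ω in A, (‖Y (σ ω) ω‖ₑ + 1) ∂μ + ε := by
  have hLm : Measurable L := hL.mono (iSup_le 𝒢.le) le_rfl
  have hAm : MeasurableSet A := iSup_le 𝒢.le _ hA.1
  set f : Ω → ℝ := A.indicator fun ω => (L ω).toReal
  have hf : Integrable f μ := (integrable_indicator_iff hAm).2
    (integrable_toReal_of_lintegral_ne_top hLm.aemeasurable hLA)
  have hfL : ∀ ω, ENNReal.ofReal (f ω) ≤ L ω := fun ω => by
    by_cases hωA : ω ∈ A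
    · simpa [f, hωA] using ENNReal.ofReal_toReal_le
    · simp [f, hωA]
  have hfL_ae : ∀ᵐ ω ∂μ.restrict A, L ω = ENNReal.ofReal (f ω) := by
    filter_upwards [ae_lt_top' hLm.aemeasurable hLA, ae_restrict_mem hAm] with ω hfin hωA
    simp [f, hωA, ENNReal.ofReal_toReal hfin.ne]
  obtain ⟨σ, hσ, hρσ, hle⟩ := exists_isStoppingTime_setLIntegral_ofReal_le hY hρ hf
    (ae_of_all _ fun ω => Set.indicator_nonneg (fun _ _ => ENNReal.toReal_nonneg) ω)
    (hL.ennreal_toReal.indicator hA.1).stronglyMeasurable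
    (hLY.mono fun ω h => (hfL ω).trans h) hA hε
  exact ⟨σ, hσ, hρσ, (lintegral_congr_ae hfL_ae).trans_le hle⟩

theorem exists_isStoppingTime_lintegral_le [IsFiniteMeasure μ] {Y : ℕ → Ω → ℝ}
    (hY : Adapted 𝒢 Y) {ρ : Ω → ℕ} (hρ : IsStoppingTime 𝒢 fun ω => (ρ ω : WithTop ℕ))
    {L : Ω → ℝ≥0∞} (hL : Measurable[⨆ n, 𝒢 n] L)
    (hLY : ∀ᵐ ω ∂μ, L ω ≤ liminf (fun n => ‖Y n ω‖ₑ) atTop) {J : Ω → ℕ}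
    (hJ : Measurable[hρ.measurableSpace] J) (hJL : ∀ j, ∫⁻ ω in J ⁻¹' {j}, L ω ∂μ ≠ ∞)
    {ε : ℝ≥0∞} (hε : ε ≠ 0) :
    ∃ τ : Ω → ℕ, (IsStoppingTime 𝒢 fun ω => (τ ω : WithTop ℕ)) ∧
      ∫⁻ ω, L ω ∂μ ≤ ∫⁻ ω, (‖Y (τ ω) ω‖ₑ + 1) ∂μ + ε := by
  obtain ⟨δ, hδ0, hδ⟩ := ENNReal.exists_pos_sum_of_countable hε ℕ
  choose σ hσ hρσ hσL using fun j => exists_isStoppingTime_setLIntegral_le hY hρ hL hLY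
    (hJ (measurableSet_singleton j)) (hJL j) (ENNReal.coe_ne_zero.2 (hδ0 j).ne')
  refine ⟨fun ω => σ (J ω) ω, isStoppingTime_apply_index hρ hσ
    (fun j ω => WithTop.coe_le_coe.2 (hρσ j ω)) hJ, ?_⟩
  have hJm : Measurable J := hJ.mono hρ.measurableSpace_le le_rfl
  calc ∫⁻ ω, L ω ∂μ = ∑' j, ∫⁻ ω in J ⁻¹' {j}, L ω ∂μ :=
        lintegral_eq_tsum_preimage_singleton hJm L
    _ ≤ ∑' j, (∫⁻ ω in J ⁻¹' {j}, (‖Y (σ (J ω) ω) ω‖ₑ + 1) ∂μ + δ j) := by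
        refine ENNReal.tsum_le_tsum fun j => (hσL j).trans_eq ?_
        congr 1
        exact setLIntegral_congr_fun (hJm (measurableSet_singleton j)) fun ω hω => by
          rw [Set.mem_preimage, Set.mem_singleton_iff] at hω
          rw [hω]
    _ ≤ ∫⁻ ω, (‖Y (σ (J ω) ω) ω‖ₑ + 1) ∂μ + ε := by
        rw [ENNReal.tsum_add, ← lintegral_eq_tsum_preimage_singleton hJm]
        exact add_le_add_right hδ.le _

end Discrete

section NNRealTime

variable {ℱ : Filtration ℝ≥0 m}

theorem IsStoppingTime.natCast_of_reindex {τ : Ω → ℕ}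
    (hτ : IsStoppingTime (ℱ.reindex Nat.cast Nat.mono_cast) fun ω => (τ ω : WithTop ℕ)) :
    IsStoppingTime ℱ fun ω => ((τ ω : ℝ≥0) : WithTop ℝ≥0) := by
  intro t
  simp only [WithTop.coe_le_coe, ← Nat.le_floor_iff (zero_le : 0 ≤ t)]
  exact ℱ.mono (Nat.floor_le t.2) _ (hτ.measurableSet_le_nat ⌊t⌋₊)

theorem IsStoppingTime.ceil {η : Ω → ℝ≥0} (hη : IsStoppingTime ℱ fun ω => (η ω : WithTop ℝ≥0)) :
    IsStoppingTime (ℱ.reindex Nat.cast Nat.mono_cast) fun ω => (⌈η ω⌉₊ : WithTop ℕ) := by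
  intro n
  simp only [Nat.cast_withTop, WithTop.coe_le_coe, Nat.ceil_le]
  exact (by simpa only [WithTop.coe_le_coe] using hη n : MeasurableSet[ℱ n] {ω | η ω ≤ n})

theorem IsStoppingTime.measurableSpace_le_ceil {η : Ω → ℝ≥0}
    (hη : IsStoppingTime ℱ fun ω => (η ω : WithTop ℝ≥0)) :
    hη.measurableSpace ≤ hη.ceil.measurableSpace := by
  intro s hs
  have hsn : ∀ n : ℕ, MeasurableSet[ℱ n] (s ∩ {ω | (⌈η ω⌉₊ : WithTop ℕ) ≤ n}) := fun n => by
    simpa only [Nat.cast_withTop, WithTop.coe_le_coe, Nat.ceil_le] using hs.2 n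
  refine ⟨?_, hsn⟩
  have hunion : s = ⋃ n : ℕ, s ∩ {ω | (⌈η ω⌉₊ : WithTop ℕ) ≤ n} := by
    ext ω
    simpa using fun _ => ⟨⌈η ω⌉₊, Nat.le_ceil _⟩
  rw [hunion]
  exact MeasurableSet.iUnion fun n =>
    le_iSup (fun n => (ℱ.reindex Nat.cast Nat.mono_cast n : MeasurableSpace Ω)) n _ (hsn n)

theorem Adapted.exists_measurable_ae_eq_liminf {X : ℝ≥0 → Ω → ℝ} (hX : Adapted ℱ X)
    (hrc : ∀ᵐ ω ∂μ, ∀ t, ContinuousWithinAt (fun s => X s ω) (Set.Ici t) t) :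
    ∃ L : Ω → ℝ≥0∞, Measurable[⨆ n, ℱ.reindex Nat.cast Nat.mono_cast n] L ∧
      ∀ᵐ ω ∂μ, liminf (fun t => ‖X t ω‖ₑ) atTop = L ω := by
  obtain ⟨D, hDc, hD⟩ := TopologicalSpace.exists_countable_dense ℝ≥0
  refine ⟨fun ω => ⨆ n : ℕ, ⨅ t ∈ Set.Ici (n : ℝ≥0) ∩ D, ‖X t ω‖ₑ, ?_, ?_⟩
  · refine Measurable.iSup fun n => Measurable.biInf _ (hDc.mono Set.inter_subset_right)
      fun t _ => ?_
    have hle : ℱ t ≤ ⨆ n, ℱ.reindex Nat.cast Nat.mono_cast n :=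
      (ℱ.mono (Nat.le_ceil t)).trans
        (le_iSup (fun n => (ℱ.reindex Nat.cast Nat.mono_cast n : MeasurableSpace Ω)) ⌈t⌉₊)
    exact (measurable_enorm.comp (hX t)).mono hle le_rfl
  · filter_upwards [hrc] with ω hω
    exact liminf_eq_iSup_iInf_Ici_inter_of_dense
      (fun t => continuous_enorm.continuousAt.comp_continuousWithinAt (hω t)) hD

end NNRealTime

end MeasureTheory

open MeasureTheory

theorem statement14_general {Ω : Type*} {m : MeasurableSpace Ω} {μ : Measure Ω} [IsProbabilityMeasure μ]
    (ℱ : Filtration ℝ≥0 m) (X : ℝ≥0 → Ω → ℝ)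
    (hadapted : Adapted ℱ X)
    (hrc : ∀ᵐ ω ∂μ, ∀ t : ℝ≥0, ContinuousWithinAt (fun s => X s ω) (Set.Ici t) t)
    (hstop : ∀ τ : Ω → ℝ≥0, IsStoppingTime ℱ (fun ω => (τ ω : WithTop ℝ≥0)) → Integrable (fun ω => X (τ ω) ω) μ)
    (η : Ω → ℝ≥0) (hη : IsStoppingTime ℱ (fun ω => (η ω : WithTop ℝ≥0)))
    (g : Ω → ℝ≥0∞) (hg : Measurable[hη.measurableSpace] g) (hgfin : ∀ᵐ ω ∂μ, g ω < ⊤)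
    (hgcond : ∀ s : Set Ω, MeasurableSet[hη.measurableSpace] s →
      ∫⁻ ω in s, Filter.liminf (fun t => (‖X t ω‖₊ : ℝ≥0∞)) atTop ∂μ = ∫⁻ ω in s, g ω ∂μ) :
    ∫⁻ ω, Filter.liminf (fun t => (‖X t ω‖₊ : ℝ≥0∞)) atTop ∂μ < ⊤ := by
  simp only [← enorm_eq_nnnorm] at hgcond ⊢
  obtain ⟨L, hLm, hLae⟩ := hadapted.exists_measurable_ae_eq_liminf hrc
  have hLY : ∀ᵐ ω ∂μ, L ω ≤ liminf (fun n : ℕ => ‖X n ω‖ₑ) atTop :=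
    hLae.mono fun ω h => h ▸ tendsto_natCast_atTop_atTop.liminf_le_liminf_comp
  set J : Ω → ℕ := fun ω => ⌊(g ω).toReal⌋₊
  have hJ : Measurable[hη.measurableSpace] J :=
    Nat.measurable_floor.comp (ENNReal.measurable_toReal.comp hg)
  have hJL : ∀ j, ∫⁻ ω in J ⁻¹' {j}, L ω ∂μ ≠ ∞ := fun j => by
    rw [← lintegral_congr_ae (ae_restrict_of_ae hLae), hgcond _ (hJ (measurableSet_singleton j))]
    exact setLIntegral_preimage_floor_toReal_ne_top (hg.mono hη.measurableSpace_le le_rfl) hgfin j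
  obtain ⟨τ, hτ, hle⟩ := exists_isStoppingTime_lintegral_le (fun n => hadapted n) hη.ceil hLm hLY
    (hJ.mono hη.measurableSpace_le_ceil le_rfl) hJL one_ne_zero
  have hXτ : ∫⁻ ω, ‖X (τ ω) ω‖ₑ ∂μ < ∞ := (hstop _ hτ.natCast_of_reindex).2
  rw [lintegral_congr_ae hLae]
  calc ∫⁻ ω, L ω ∂μ ≤ ∫⁻ ω, (‖X (τ ω) ω‖ₑ + 1) ∂μ + 1 := hle
    _ < ∞ := by
      rw [lintegral_add_right _ measurable_const, lintegral_const, measure_univ, mul_one]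
      exact ENNReal.add_lt_top.2 ⟨ENNReal.add_lt_top.2 ⟨hXτ, ENNReal.one_lt_top⟩,
        ENNReal.one_lt_top⟩

/-- If the filtration and the paths of `X` are right-continuous, `X_τ ∈ L¹` for
all finite stopping times `τ`, and `E[liminf_{t→∞} |X_t| | ℱ_η] < ∞` a.s. for some finite
stopping time `η` (expressed via an `ℱ_η`-measurable a.e. finite `g` with the defining
property of conditional expectation), then `liminf_{t→∞} |X_t|` is integrable. -/
theorem statement14 {Ω : Type*} {m : MeasurableSpace Ω} {μ : Measure Ω} [IsProbabilityMeasure μ]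
    (ℱ : Filtration ℝ≥0 m) (X : ℝ≥0 → Ω → ℝ)
    (hℱ : ∀ t : ℝ≥0, ℱ t = ⨅ s : {s : ℝ≥0 // t < s}, ℱ s.1)
    (hadapted : Adapted ℱ X)
    (hrc : ∀ᵐ ω ∂μ, ∀ t : ℝ≥0, ContinuousWithinAt (fun s => X s ω) (Set.Ici t) t)
    (hstop : ∀ τ : Ω → ℝ≥0, IsStoppingTime ℱ (fun ω => (τ ω : WithTop ℝ≥0)) → Integrable (fun ω => X (τ ω) ω) μ)
    (η : Ω → ℝ≥0) (hη : IsStoppingTime ℱ (fun ω => (η ω : WithTop ℝ≥0)))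
    (g : Ω → ℝ≥0∞) (hg : Measurable[hη.measurableSpace] g) (hgfin : ∀ᵐ ω ∂μ, g ω < ⊤)
    (hgcond : ∀ s : Set Ω, MeasurableSet[hη.measurableSpace] s →
      ∫⁻ ω in s, Filter.liminf (fun t => (‖X t ω‖₊ : ℝ≥0∞)) atTop ∂μ = ∫⁻ ω in s, g ω ∂μ) :
    ∫⁻ ω, Filter.liminf (fun t => (‖X t ω‖₊ : ℝ≥0∞)) atTop ∂μ < ⊤ :=
  statement14_general ℱ X hadapted hrc hstop η hη g hg hgfin hgcond
end

section
/- Let X be a right-continuous adapted process such that X_τ is integrable and E[X_τ] = E[X_0] for all finite stopping times τ with respect to the filtration (F_t). Then the same holds for all finite stopping times of the right-continuous augmentation (F_t^+): for any finite (F_t^+)-stopping time σ̂, X_{σ̂} is integrable and E[X_{σ̂}] = E[X_0]. -/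
open MeasureTheory Filter ProbabilityTheory
open scoped ENNReal NNReal Topology

/-!
Approximate `σ̂` from above by the dyadic times `ρₙ = ⌈(σ̂ + 2⁻ⁿ) 2ⁿ⌉ / 2ⁿ`. Since `σ̂ + 2⁻ⁿ` is an
`ℱ`-stopping time, so is `ρₙ`; it takes countably many values, so `X_{ρₙ}` is
`ℱ_{ρₙ}`-measurable. Applying the hypothesis to the stopping time equal to `ρₙ` on `A ∈ ℱ_{ρₙ}`
and to `σ̂ + 2` off `A` gives `X_{ρₙ} = E[X_{σ̂+2} | ℱ_{ρₙ}]`, so the family `X_{ρₙ}` is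
uniformly integrable. Right-continuity gives `X_{ρₙ} → X_{σ̂}` a.e., and Vitali's convergence
theorem carries integrability and the value of the expectation to the limit.
-/

noncomputable def dyadicCeil (n : ℕ) (x : ℝ≥0) : ℝ≥0 := ⌈x * 2 ^ n⌉₊ / 2 ^ n

lemma le_dyadicCeil (n : ℕ) (x : ℝ≥0) : x ≤ dyadicCeil n x := by
  rw [dyadicCeil, le_div_iff₀ (by positivity)]
  exact Nat.le_ceil _

lemma dyadicCeil_le_add (n : ℕ) (x : ℝ≥0) : dyadicCeil n x ≤ x + (2 ^ n)⁻¹ := by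
  rw [dyadicCeil, div_le_iff₀ (by positivity), add_mul, inv_mul_cancel₀ (by positivity)]
  exact (Nat.ceil_lt_add_one zero_le).le

lemma dyadicCeil_le_iff {n : ℕ} {x t : ℝ≥0} :
    dyadicCeil n x ≤ t ↔ x ≤ ⌊t * 2 ^ n⌋₊ / 2 ^ n := by
  rw [dyadicCeil, div_le_iff₀ (by positivity), le_div_iff₀ (by positivity),
    ← Nat.le_floor_iff zero_le, Nat.ceil_le]

lemma floor_mul_two_pow_div_le (n : ℕ) (t : ℝ≥0) :
    (⌊t * 2 ^ n⌋₊ : ℝ≥0) / 2 ^ n ≤ t := by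
  rw [div_le_iff₀ (by positivity)]
  exact Nat.floor_le zero_le

lemma countable_range_dyadicCeil (n : ℕ) : (Set.range (dyadicCeil n)).Countable :=
  (Set.countable_range fun k : ℕ => (k : ℝ≥0) / 2 ^ n).mono <| by
    rintro _ ⟨x, rfl⟩
    exact ⟨_, rfl⟩

lemma tendsto_dyadicCeil_add_inv_two_pow (x : ℝ≥0) :
    Tendsto (fun n => dyadicCeil n (x + (2 ^ n)⁻¹)) atTop (𝓝[≥] x) := by
  have h_inv : Tendsto (fun n : ℕ => ((2 : ℝ≥0) ^ n)⁻¹) atTop (𝓝 0) := by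
    simpa only [inv_pow] using
      NNReal.tendsto_pow_atTop_nhds_zero_of_lt_one (r := 2⁻¹) (by norm_num)
  have h_upper : Tendsto (fun n : ℕ => x + (2 ^ n)⁻¹ + (2 ^ n)⁻¹) atTop (𝓝 x) := by
    simpa using (tendsto_const_nhds.add h_inv).add h_inv
  have h_ge : ∀ n, x ≤ dyadicCeil n (x + (2 ^ n)⁻¹) := fun n =>
    le_self_add.trans (le_dyadicCeil _ _)
  refine tendsto_nhdsWithin_iff.2 ⟨?_, Eventually.of_forall h_ge⟩
  exact tendsto_of_tendsto_of_tendsto_of_le_of_le tendsto_const_nhds h_upper h_ge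
    fun n => dyadicCeil_le_add _ _

namespace MeasureTheory

variable {Ω : Type*} {m : MeasurableSpace Ω}

lemma IsStoppingTime.dyadicCeil {ℱ : Filtration ℝ≥0 m} {τ : Ω → ℝ≥0}
    (hτ : IsStoppingTime ℱ fun ω => (τ ω : WithTop ℝ≥0)) (n : ℕ) :
    IsStoppingTime ℱ fun ω => (dyadicCeil n (τ ω) : WithTop ℝ≥0) := by
  intro t
  simp only [WithTop.coe_le_coe, dyadicCeil_le_iff]
  have h := hτ (⌊t * 2 ^ n⌋₊ / 2 ^ n)
  simp only [WithTop.coe_le_coe] at h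
  exact ℱ.mono (floor_mul_two_pow_div_le n t) _ h

section RightContinuousAugmentation

variable {ℱ : Filtration ℝ≥0 m} {σ : Ω → ℝ≥0}

lemma measurableSet_le_of_iInf_gt
    (hσ : ∀ t, MeasurableSet[⨅ s : {s : ℝ≥0 // t < s}, ℱ s.1] {ω | σ ω ≤ t})
    {s t : ℝ≥0} (hst : s < t) : MeasurableSet[ℱ t] {ω | σ ω ≤ s} :=
  iInf_le (fun u : {u : ℝ≥0 // s < u} => ℱ u.1) ⟨t, hst⟩ _ (hσ s)

lemma isStoppingTime_add_of_iInf_gt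
    (hσ : ∀ t, MeasurableSet[⨅ s : {s : ℝ≥0 // t < s}, ℱ s.1] {ω | σ ω ≤ t})
    {ε : ℝ≥0} (hε : 0 < ε) : IsStoppingTime ℱ fun ω => ((σ ω + ε : ℝ≥0) : WithTop ℝ≥0) := by
  intro t
  simp only [WithTop.coe_le_coe]
  by_cases hεt : ε ≤ t
  · simp_rw [← le_tsub_iff_right hεt]
    exact measurableSet_le_of_iInf_gt hσ (tsub_lt_self (hε.trans_le hεt) hε)
  · have : {ω | σ ω + ε ≤ t} = ∅ :=
      Set.eq_empty_of_forall_notMem fun ω h => hεt (le_add_self.trans h)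
    rw [this]
    exact @MeasurableSet.empty _ (ℱ t)

end RightContinuousAugmentation

section StoppingCondition

variable {ι : Type*}

lemma IsStoppingTime.piecewise_of_le_of_measurableSet [Preorder ι] {ℱ : Filtration ι m}
    {ρ σ : Ω → WithTop ι} (hρ : IsStoppingTime ℱ ρ) (hσ : IsStoppingTime ℱ σ) (hle : ρ ≤ σ)
    {A : Set Ω} [DecidablePred (· ∈ A)] (hA : MeasurableSet[hρ.measurableSpace] A) :
    IsStoppingTime ℱ (A.piecewise ρ σ) := by
  intro t
  have : {ω | A.piecewise ρ σ ω ≤ t} =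
      A ∩ {ω | ρ ω ≤ t} ∪ Aᶜ ∩ {ω | ρ ω ≤ t} ∩ {ω | σ ω ≤ t} := by
    ext ω
    by_cases hω : ω ∈ A
    · simp [hω]
    · simpa [hω] using fun h => (hle ω).trans h
  rw [this]
  exact (hA.2 t).union ((hA.compl.2 t).inter (hσ t))

lemma Adapted.measurable_apply_stoppingTime_of_countable_range [PartialOrder ι]
    {ℱ : Filtration ι m} {β : Type*} [MeasurableSpace β] {X : ι → Ω → β} (hX : Adapted ℱ X)
    {τ : Ω → ι}
    (hτ : IsStoppingTime ℱ fun ω => (τ ω : WithTop ι)) (hτ_range : (Set.range τ).Countable) :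
    Measurable[hτ.measurableSpace] fun ω => X (τ ω) ω := by
  intro B hB
  have h_range : (Set.range fun ω => (τ ω : WithTop ι)).Countable := by
    refine (hτ_range.image ((↑) : ι → WithTop ι)).mono ?_
    rintro _ ⟨ω, rfl⟩
    exact ⟨τ ω, ⟨ω, rfl⟩, rfl⟩
  have : (fun ω => X (τ ω) ω) ⁻¹' B =
      ⋃ i ∈ Set.range τ, X i ⁻¹' B ∩ {ω | (τ ω : WithTop ι) = i} := by
    ext ω
    simp only [Set.mem_preimage, Set.mem_iUnion, Set.mem_inter_iff, Set.mem_ofPred_eq,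
      Set.mem_range, WithTop.coe_eq_coe, exists_prop, exists_exists_eq_and]
    exact ⟨fun h => ⟨ω, h, rfl⟩, fun ⟨ω', h, hω'⟩ => hω' ▸ h⟩
  rw [this]
  refine MeasurableSet.biUnion hτ_range fun i _ => ?_
  rw [IsStoppingTime.measurableSet_inter_eq_iff]
  exact (hX i hB).inter (hτ.measurableSet_eq_of_countable_range h_range i)

lemma setIntegral_eq_of_isStoppingTime_le [Preorder ι] {ℱ : Filtration ι m} {μ : Measure Ω}
    {X : ι → Ω → ℝ} {c : ℝ}
    (hmean : ∀ τ : Ω → ι, IsStoppingTime ℱ (fun ω => (τ ω : WithTop ι)) →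
      Integrable (fun ω => X (τ ω) ω) μ ∧ ∫ ω, X (τ ω) ω ∂μ = c)
    {ρ σ : Ω → ι} (hρ : IsStoppingTime ℱ fun ω => (ρ ω : WithTop ι))
    (hσ : IsStoppingTime ℱ fun ω => (σ ω : WithTop ι)) (hle : ρ ≤ σ)
    {A : Set Ω} (hA : MeasurableSet[hρ.measurableSpace] A) :
    ∫ ω in A, X (ρ ω) ω ∂μ = ∫ ω in A, X (σ ω) ω ∂μ := by
  classical
  have hAm : MeasurableSet A := hρ.measurableSpace_le _ hA
  have hτ : IsStoppingTime ℱ fun ω => (A.piecewise ρ σ ω : WithTop ι) := by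
    convert hρ.piecewise_of_le_of_measurableSet hσ (fun ω => WithTop.coe_le_coe.2 (hle ω)) hA
      using 1
    funext ω
    by_cases hω : ω ∈ A <;> simp [hω]
  obtain ⟨hρ_int, -⟩ := hmean ρ hρ
  obtain ⟨hσ_int, hσ_mean⟩ := hmean σ hσ
  have h_split : ∫ ω in A, X (ρ ω) ω ∂μ + ∫ ω in Aᶜ, X (σ ω) ω ∂μ = c := by
    rw [← integral_piecewise hAm hρ_int.integrableOn hσ_int.integrableOn, ← (hmean _ hτ).2]
    congr 1 with ω
    by_cases hω : ω ∈ A <;> simp [hω]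
  rw [← integral_add_compl hAm hσ_int] at hσ_mean
  linarith

lemma ae_eq_condExp_of_isStoppingTime_le [Preorder ι] {ℱ : Filtration ι m} {μ : Measure Ω}
    [IsFiniteMeasure μ] {X : ι → Ω → ℝ} {c : ℝ}
    (hmean : ∀ τ : Ω → ι, IsStoppingTime ℱ (fun ω => (τ ω : WithTop ι)) →
      Integrable (fun ω => X (τ ω) ω) μ ∧ ∫ ω, X (τ ω) ω ∂μ = c)
    {ρ σ : Ω → ι} (hρ : IsStoppingTime ℱ fun ω => (ρ ω : WithTop ι))
    (hσ : IsStoppingTime ℱ fun ω => (σ ω : WithTop ι)) (hle : ρ ≤ σ)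
    (hXρ : Measurable[hρ.measurableSpace] fun ω => X (ρ ω) ω) :
    (fun ω => X (ρ ω) ω) =ᵐ[μ] μ[fun ω => X (σ ω) ω | hρ.measurableSpace] :=
  ae_eq_condExp_of_forall_setIntegral_eq hρ.measurableSpace_le (hmean σ hσ).1
    (fun _ _ _ => (hmean ρ hρ).1.integrableOn)
    (fun _ hA _ => setIntegral_eq_of_isStoppingTime_le hmean hρ hσ hle hA)
    hXρ.stronglyMeasurable.aestronglyMeasurable

end StoppingCondition

lemma integrable_and_tendsto_integral_of_ae_eq_condExp {μ : Measure Ω} [IsFiniteMeasure μ]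
    {𝒢 : ℕ → MeasurableSpace Ω} (h𝒢 : ∀ n, 𝒢 n ≤ m) {g F : Ω → ℝ} (hg : Integrable g μ)
    {f : ℕ → Ω → ℝ} (hf : ∀ n, f n =ᵐ[μ] μ[g | 𝒢 n])
    (hF : ∀ᵐ ω ∂μ, Tendsto (fun n => f n ω) atTop (𝓝 (F ω))) :
    Integrable F μ ∧ Tendsto (fun n => ∫ ω, f n ω ∂μ) atTop (𝓝 (∫ ω, F ω ∂μ)) := by
  have hui : UniformIntegrable f 1 μ :=
    (hg.uniformIntegrable_condExp h𝒢).ae_eq fun n => (hf n).symm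
  have hF_int : Integrable F μ := hui.integrable_of_ae_tendsto hF
  refine ⟨hF_int, tendsto_integral_of_L1' F hF_int.aestronglyMeasurable
    (Eventually.of_forall fun n => memLp_one_iff_integrable.1 (hui.memLp n)) ?_⟩
  exact tendsto_Lp_finite_of_tendsto_ae le_rfl ENNReal.one_ne_top hui.1
    (memLp_one_iff_integrable.2 hF_int) hui.2.1 hF

end MeasureTheory

/-- Let `X` be right-continuous and adapted with `X_τ ∈ L¹` and
`E[X_τ] = E[X_0]` for all finite `ℱ`-stopping times `τ`. Then the same holds for every finite
stopping time `σhat` of the right-continuous augmentation `ℱ⁺` (where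
`ℱ⁺ t = ⨅_{s > t} ℱ s`): `X_{σhat} ∈ L¹` and `E[X_{σhat}] = E[X_0]`. -/
theorem statement16 {Ω : Type*} {m : MeasurableSpace Ω} {μ : Measure Ω} [IsProbabilityMeasure μ]
    (ℱ : Filtration ℝ≥0 m) (X : ℝ≥0 → Ω → ℝ)
    (hadapted : Adapted ℱ X)
    (hrc : ∀ᵐ ω ∂μ, ∀ t : ℝ≥0, ContinuousWithinAt (fun s => X s ω) (Set.Ici t) t)
    (hstop : ∀ τ : Ω → ℝ≥0, IsStoppingTime ℱ (fun ω => (τ ω : WithTop ℝ≥0)) →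
      Integrable (fun ω => X (τ ω) ω) μ ∧ ∫ ω, X (τ ω) ω ∂μ = ∫ ω, X 0 ω ∂μ)
    (σhat : Ω → ℝ≥0)
    (hσhat : ∀ t : ℝ≥0, MeasurableSet[⨅ s : {s : ℝ≥0 // t < s}, ℱ s.1] {ω | σhat ω ≤ t}) :
    Integrable (fun ω => X (σhat ω) ω) μ ∧ ∫ ω, X (σhat ω) ω ∂μ = ∫ ω, X 0 ω ∂μ := by
  set ρ : ℕ → Ω → ℝ≥0 := fun n ω => dyadicCeil n (σhat ω + (2 ^ n)⁻¹)
  have hρ (n : ℕ) : IsStoppingTime ℱ fun ω => (ρ n ω : WithTop ℝ≥0) :=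
    (isStoppingTime_add_of_iInf_gt hσhat (ε := (2 ^ n)⁻¹) (by positivity)).dyadicCeil n
  have hσ₂ : IsStoppingTime ℱ fun ω => (σhat ω + 2 : WithTop ℝ≥0) :=
    isStoppingTime_add_of_iInf_gt hσhat two_pos
  have hρ_le (n : ℕ) : ρ n ≤ fun ω => σhat ω + 2 := fun ω =>
    calc ρ n ω ≤ σhat ω + (2 ^ n)⁻¹ + (2 ^ n)⁻¹ := dyadicCeil_le_add _ _
      _ ≤ σhat ω + 1 + 1 := by
        gcongr <;> exact inv_le_one_of_one_le₀ (one_le_pow₀ one_le_two)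
      _ = σhat ω + 2 := by ring
  have hcond (n : ℕ) : (fun ω => X (ρ n ω) ω)
      =ᵐ[μ] μ[fun ω => X (σhat ω + 2) ω | (hρ n).measurableSpace] :=
    ae_eq_condExp_of_isStoppingTime_le hstop (hρ n) hσ₂ (hρ_le n)
      (hadapted.measurable_apply_stoppingTime_of_countable_range (hρ n)
        ((countable_range_dyadicCeil n).mono (by rintro _ ⟨ω, rfl⟩; exact ⟨_, rfl⟩)))
  have hlim : ∀ᵐ ω ∂μ, Tendsto (fun n => X (ρ n ω) ω) atTop (𝓝 (X (σhat ω) ω)) := by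
    filter_upwards [hrc] with ω hω
    exact (hω (σhat ω)).tendsto.comp (tendsto_dyadicCeil_add_inv_two_pow _)
  obtain ⟨hint, htend⟩ := integrable_and_tendsto_integral_of_ae_eq_condExp
    (fun n => (hρ n).measurableSpace_le) (hstop _ hσ₂).1 hcond hlim
  refine ⟨hint, tendsto_nhds_unique htend ?_⟩
  simp only [fun n => (hstop (ρ n) (hρ n)).2, tendsto_const_nhds]
end

section
/- Let A be an event with P(A) > 0 and U a uniform(0,1) random variable (on the same space, not necessarily independent of A). Define g : [0,1] → [0,∞] by g(t) = 1/P(A ∩ {U ≤ t}). Then ∑_{n∈ℕ} P(A ∩ {g(U) ≥ n}) = ∞; in particular E[1_A g(U)] = ∞. -/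
/-!
Push `μ` restricted to `A` forward along `U`: this gives a finite measure `ν` on `ℝ` with
`g t = (ν (Iic t))⁻¹`, and `ν` has no atoms because it is dominated by the uniform law of `U`.
Hence the distribution function `t ↦ ν (Iic t)` is continuous, and for every `n` with
`1 / n < ν ℝ` it takes the value `1 / n` at some `t`; since `Iic t ⊆ {g ≥ n}`, this gives
`ν {g ≥ n} ≥ 1 / n`, so the sum diverges with the harmonic series. The integral of `g`
dominates `∑_{n ≥ 1} ν {g ≥ n}`.
-/

open MeasureTheory Filter Set
open scoped ENNReal NNReal Topology

lemma ENNReal.tsum_inv_natCast_add_eq_top (N : ℕ) : ∑' n : ℕ, ((n + N : ℕ) : ℝ≥0∞)⁻¹ = ∞ := by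
  rcases N.eq_zero_or_pos with rfl | hN
  · exact ENNReal.tsum_eq_top_of_eq_top ⟨0, by simp⟩
  have hcoe (n : ℕ) : ((n + N : ℕ) : ℝ≥0∞)⁻¹ = (((n + N : ℕ) : ℝ≥0)⁻¹ : ℝ≥0) := by
    rw [ENNReal.coe_inv (by positivity), ENNReal.coe_natCast]
  rw [tsum_congr hcoe, ENNReal.tsum_coe_eq_top_iff_not_summable_coe]
  simpa using
    mt (summable_nat_add_iff (f := fun n : ℕ => (n : ℝ)⁻¹) N).1 Real.not_summable_natCast_inv

lemma ENNReal.tsum_ite_natCast_succ_le_le (y : ℝ≥0∞) :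
    ∑' n : ℕ, (if ((n + 1 : ℕ) : ℝ≥0∞) ≤ y then 1 else 0) ≤ y := by
  rcases eq_or_ne y ∞ with rfl | hy
  · exact le_top
  lift y to ℝ≥0 using hy
  have hiff (n : ℕ) : ((n + 1 : ℕ) : ℝ≥0∞) ≤ y ↔ n ∈ Finset.range ⌊y⌋₊ := by
    rw [Finset.mem_range, Nat.lt_iff_add_one_le, Nat.le_floor_iff (zero_le (a := y)),
      ← ENNReal.coe_natCast, ENNReal.coe_le_coe]
  simp_rw [hiff]
  rw [tsum_eq_sum (s := Finset.range ⌊y⌋₊) (fun n hn => if_neg hn), Finset.sum_ite_mem]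
  simpa using Nat.floor_le (zero_le (a := y))

theorem tsum_measure_natCast_succ_le_le_lintegral {α : Type*} [MeasurableSpace α] (μ : Measure α)
    {f : α → ℝ≥0∞} (hf : Measurable f) :
    ∑' n : ℕ, μ {x | ((n + 1 : ℕ) : ℝ≥0∞) ≤ f x} ≤ ∫⁻ x, f x ∂μ := by
  have hmeas (n : ℕ) : MeasurableSet {x | ((n + 1 : ℕ) : ℝ≥0∞) ≤ f x} :=
    measurableSet_le measurable_const hf
  calc ∑' n : ℕ, μ {x | ((n + 1 : ℕ) : ℝ≥0∞) ≤ f x}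
      = ∫⁻ x, ∑' n : ℕ, {x | ((n + 1 : ℕ) : ℝ≥0∞) ≤ f x}.indicator 1 x ∂μ := by
        rw [lintegral_tsum fun n => (measurable_one.indicator (hmeas n)).aemeasurable]
        simp_rw [lintegral_indicator_one (hmeas _)]
    _ ≤ ∫⁻ x, f x ∂μ := by
        gcongr with x
        simpa [Set.indicator_apply] using ENNReal.tsum_ite_natCast_succ_le_le (f x)

section CDF

variable {ν : Measure ℝ}

theorem tendsto_measure_Iic_atBot [IsFiniteMeasure ν] :
    Tendsto (fun x => ν (Iic x)) atBot (𝓝 0) := by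
  have := tendsto_measure_iInter_atBot (μ := ν) (fun x => measurableSet_Iic.nullMeasurableSet)
    (monotone_Iic (α := ℝ)) ⟨0, measure_ne_top ν _⟩
  rwa [(iInter_Iic_eq_empty_iff (f := fun x : ℝ => x)).2 (by simp [not_bddBelow_univ]),
    measure_empty] at this

theorem tendsto_measure_Iic_nhdsGT [IsFiniteMeasure ν] (x : ℝ) :
    Tendsto (fun t => ν (Iic t)) (𝓝[>] x) (𝓝 (ν (Iic x))) := by
  have := tendsto_measure_biInter_gt (μ := ν) (s := Iic) (a := x)
    (fun _ _ => measurableSet_Iic.nullMeasurableSet) (fun _ _ _ => Iic_subset_Iic.2)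
    ⟨x + 1, by linarith, measure_ne_top ν _⟩
  have hIic : ⋂ r > x, Iic r = Iic x := by
    ext y
    simpa only [mem_iInter₂, mem_Iic] using forall_gt_imp_ge_iff_le_of_dense
  rwa [hIic] at this

theorem tendsto_measure_Iic_nhdsLT [NullSingletonClass ν] (x : ℝ) :
    Tendsto (fun t => ν (Iic t)) (𝓝[<] x) (𝓝 (ν (Iic x))) := by
  have : (atTop : Filter (Iio x)).IsCountablyGenerated := by
    rw [← comap_coe_Iio_nhdsLT x]
    infer_instance
  have hIio : ⋃ t : Iio x, Iic (t : ℝ) = Iio x := by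
    rw [← biUnion_eq_iUnion (Iio x) fun t _ => Iic t]
    exact isLUB_Iio.biUnion_Iic_eq_Iio (lt_irrefl x)
  have := tendsto_measure_iUnion_atTop (μ := ν) (s := fun t : Iio x => Iic (t : ℝ))
    fun _ _ hst => Iic_subset_Iic.2 hst
  rw [hIio, measure_congr Iio_ae_eq_Iic] at this
  rwa [← map_coe_Iio_atTop x, tendsto_map'_iff]

theorem continuous_measure_Iic [IsFiniteMeasure ν] [NullSingletonClass ν] :
    Continuous fun x => ν (Iic x) :=
  continuous_iff_continuousAt.2 fun x => continuousAt_iff_continuous_left'_right'.2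
    ⟨tendsto_measure_Iic_nhdsLT x, tendsto_measure_Iic_nhdsGT x⟩

theorem exists_measure_Iic_eq [IsFiniteMeasure ν] [NullSingletonClass ν] {c : ℝ≥0∞} (hc₀ : 0 < c)
    (hc : c < ν univ) : ∃ t, ν (Iic t) = c :=
  mem_range_of_exists_le_of_exists_ge continuous_measure_Iic
    ((tendsto_order.1 tendsto_measure_Iic_atBot).2 c hc₀ |>.exists.imp fun _ => le_of_lt)
    ((tendsto_order.1 (tendsto_measure_Iic_atTop ν)).1 c hc |>.exists.imp fun _ => le_of_lt)

theorem inv_natCast_le_measure_natCast_le_inv_measure_Iic [IsFiniteMeasure ν]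
    [NullSingletonClass ν] {n : ℕ} (hn : (n : ℝ≥0∞)⁻¹ < ν univ) :
    (n : ℝ≥0∞)⁻¹ ≤ ν {x | (n : ℝ≥0∞) ≤ (ν (Iic x))⁻¹} := by
  obtain ⟨t, ht⟩ := exists_measure_Iic_eq (ENNReal.inv_pos.2 (ENNReal.natCast_ne_top n)) hn
  calc (n : ℝ≥0∞)⁻¹ = ν (Iic t) := ht.symm
    _ ≤ ν {x | (n : ℝ≥0∞) ≤ (ν (Iic x))⁻¹} := measure_mono fun x (hx : x ≤ t) => by
      rw [mem_ofPred_eq, ENNReal.le_inv_iff_le_inv, ← ht]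
      exact measure_mono (Iic_subset_Iic.2 hx)

theorem tsum_measure_natCast_le_inv_measure_Iic_eq_top [IsFiniteMeasure ν]
    [NullSingletonClass ν] (hν : ν ≠ 0) :
    ∑' n : ℕ, ν {x | (n : ℝ≥0∞) ≤ (ν (Iic x))⁻¹} = ∞ := by
  obtain ⟨N, hN⟩ := ENNReal.exists_nat_gt (ENNReal.inv_ne_top.2 (Measure.measure_univ_ne_zero.2 hν))
  have hlt (k : ℕ) : ((k + N : ℕ) : ℝ≥0∞)⁻¹ < ν univ :=
    ENNReal.inv_lt_iff_inv_lt.1 (hN.trans_le (by gcongr; omega))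
  refine top_unique ?_
  calc ∞ = ∑' k : ℕ, ((k + N : ℕ) : ℝ≥0∞)⁻¹ := (ENNReal.tsum_inv_natCast_add_eq_top N).symm
    _ ≤ ∑' k : ℕ, ν {x | ((k + N : ℕ) : ℝ≥0∞) ≤ (ν (Iic x))⁻¹} :=
      ENNReal.tsum_le_tsum fun k => inv_natCast_le_measure_natCast_le_inv_measure_Iic (hlt k)
    _ ≤ ∑' n : ℕ, ν {x | (n : ℝ≥0∞) ≤ (ν (Iic x))⁻¹} :=
      ENNReal.tsum_comp_le_tsum_of_injective (add_left_injective N) _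

theorem lintegral_inv_measure_Iic_eq_top [IsFiniteMeasure ν] [NullSingletonClass ν]
    (hν : ν ≠ 0) : ∫⁻ x, (ν (Iic x))⁻¹ ∂ν = ∞ := by
  refine top_unique ?_
  calc ∞ = ∑' n : ℕ, ν {x | ((n + 1 : ℕ) : ℝ≥0∞) ≤ (ν (Iic x))⁻¹} :=
        (ENNReal.tsum_add_one_eq_top (tsum_measure_natCast_le_inv_measure_Iic_eq_top hν)
          (measure_ne_top ν _)).symm
    _ ≤ ∫⁻ x, (ν (Iic x))⁻¹ ∂ν := tsum_measure_natCast_succ_le_le_lintegral ν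
        continuous_measure_Iic.measurable.inv

end CDF

theorem statement17_general {Ω : Type*} {m : MeasurableSpace Ω} {μ : Measure Ω} [IsProbabilityMeasure μ]
    (A : Set Ω) (hApos : 0 < μ A)
    (U : Ω → ℝ) (hUmeas : Measurable U)
    (hUlaw : Measure.map U μ = (volume : Measure ℝ).restrict (Set.Ioo 0 1)) :
    (∑' n : ℕ, μ (A ∩ {ω | (n : ℝ≥0∞) ≤ (μ (A ∩ {ω' | U ω' ≤ U ω}))⁻¹}) = ⊤) ∧
      ∫⁻ ω in A, (μ (A ∩ {ω' | U ω' ≤ U ω}))⁻¹ ∂μ = ⊤ := by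
  set ν := (μ.restrict A).map U
  have hν (s : Set ℝ) (hs : MeasurableSet s) : ν s = μ (A ∩ U ⁻¹' s) := by
    rw [Measure.map_apply hUmeas hs, Measure.restrict_apply (hUmeas hs), inter_comm]
  have : NullSingletonClass ν := ⟨fun x => by
    rw [hν _ (measurableSet_singleton x)]
    refine measure_mono_null inter_subset_right ?_
    rw [← Measure.map_apply hUmeas (measurableSet_singleton x), hUlaw]
    exact measure_singleton x⟩
  have hν₀ : ν ≠ 0 := by
    rwa [← Measure.measure_univ_pos, hν _ MeasurableSet.univ, preimage_univ, inter_univ]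
  have hcdf (t : ℝ) : μ (A ∩ {ω' | U ω' ≤ t}) = ν (Iic t) := (hν _ measurableSet_Iic).symm
  have hg : Measurable fun x => (ν (Iic x))⁻¹ := continuous_measure_Iic.measurable.inv
  simp_rw [hcdf]
  constructor
  · simpa only [hν _ (measurableSet_le measurable_const hg), preimage_ofPred_eq]
      using tsum_measure_natCast_le_inv_measure_Iic_eq_top hν₀
  · rw [← lintegral_map hg hUmeas]
    exact lintegral_inv_measure_Iic_eq_top hν₀

/-- Let `A` be an event with `P(A) > 0` and `U` a uniform(0,1) random variable
(not necessarily independent of `A`). With `g(t) = 1/P(A ∩ {U ≤ t})` (and `1/0 = ∞`),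
`∑_{n ∈ ℕ} P(A ∩ {g(U) ≥ n}) = ∞`; in particular `E[1_A g(U)] = ∞`. -/
theorem statement17 {Ω : Type*} {m : MeasurableSpace Ω} {μ : Measure Ω} [IsProbabilityMeasure μ]
    (A : Set Ω) (hAmeas : MeasurableSet A) (hApos : 0 < μ A)
    (U : Ω → ℝ) (hUmeas : Measurable U)
    (hUlaw : Measure.map U μ = (volume : Measure ℝ).restrict (Set.Ioo 0 1)) :
    (∑' n : ℕ, μ (A ∩ {ω | (n : ℝ≥0∞) ≤ (μ (A ∩ {ω' | U ω' ≤ U ω}))⁻¹}) = ⊤) ∧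
      ∫⁻ ω in A, (μ (A ∩ {ω' | U ω' ≤ U ω}))⁻¹ ∂μ = ⊤ :=
  statement17_general (m := m) A hApos U hUmeas hUlaw
end
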